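/- arXiv:0904.4027 — 8 statements merged into one kernel-verified Lean document; each statement's English description precedes it below -/
import Mathlib

section
/- Let α be a real number and β ≥ 0. If the function f_{α,β,-1}(x) = x^{x+β-α} / (e^x Γ(x+β)) is logarithmically completely monotonic on (0,∞), then either β > 0 and α ≥ max{β, 1/2}, or β = 0 and α ≥ 1. -/
open Real Set Filter Topology

/-- A positive function `f` is logarithmically completely monotonic on `s` if it has
derivatives of all orders on `s` and `(-1)^n (ln f)^(n)(x) ≥ 0` for all `n ≥ 1`, `x ∈ s`. -/
def LogCompletelyMonotonicOn (f : ℝ → ℝ) (s : Set ℝ) : Prop :=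
  (∀ x ∈ s, 0 < f x) ∧ ContDiffOn ℝ (⊤ : ℕ∞) f s ∧
    ∀ n : ℕ, 1 ≤ n → ∀ x ∈ s, 0 ≤ (-1 : ℝ) ^ n * iteratedDeriv n (fun y => Real.log (f y)) x

set_option linter.unreachableTactic false in
set_option linter.unusedTactic false in
lemma aux_core : Filter.Tendsto (fun x : ℝ => x^2 * Real.log (1+1/x) - x) Filter.atTop (nhds (-(1/2))) := by
  have key : Tendsto (fun x : ℝ => x^2 * Real.log (1+1/x) - x + 1/2) atTop (𝓝 0) := by
    apply squeeze_zero_norm' (a := fun x : ℝ => 1/(x-1))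
    · filter_upwards [eventually_gt_atTop (1:ℝ)] with x hx
      have hx0 : (0:ℝ) < x := by linarith
      have ht0 : (0:ℝ) < 1/x := by positivity
      have ht1 : 1/x < 1 := by rw [div_lt_one hx0]; linarith
      have habs : |(-(1/x) : ℝ)| < 1 := by
        rw [abs_neg, abs_of_pos ht0]; exact ht1
      have hb := Real.abs_log_sub_add_sum_range_le habs 2
      rw [Finset.sum_range_succ, Finset.sum_range_one] at hb
      rw [abs_neg, abs_of_pos ht0] at hb
      have h1 : (1:ℝ) - -(1/x) = 1 + 1/x := by ring
      rw [h1] at hb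
      have hxne : x ≠ 0 := hx0.ne'
      calc ‖x^2 * Real.log (1+1/x) - x + 1/2‖
          = |x^2 * ((-(1/x)) ^ (0+1) / ((0:ℕ) + 1) + (-(1/x)) ^ (1+1) / ((1:ℕ) + 1)
              + Real.log (1 + 1/x))| := by
            rw [Real.norm_eq_abs]; congr 1; push_cast; field_simp; ring
        _ = x^2 * |(-(1/x)) ^ (0+1) / ((0:ℕ) + 1) + (-(1/x)) ^ (1+1) / ((1:ℕ) + 1)
              + Real.log (1 + 1/x)| := by
            rw [abs_mul, abs_of_nonneg (by positivity : (0:ℝ) ≤ x^2)]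
        _ ≤ x^2 * ((1/x) ^ (2+1) / (1 - 1/x)) := by
            apply mul_le_mul_of_nonneg_left _ (by positivity : (0:ℝ) ≤ x^2)
            convert hb using 3 <;> try (push_cast; ring)
        _ = 1/(x-1) := by
            have hx1 : x - 1 ≠ 0 := by intro hc; linarith
            have h2 : 1 - 1/x = (x-1)/x := by field_simp
            rw [h2, eq_div_iff hx1]
            field_simp
            rw [div_pow, one_pow, mul_one_div, div_self (pow_ne_zero _ hxne)]
    · have : Tendsto (fun x : ℝ => x - 1) atTop atTop :=
        tendsto_atTop_add_const_right _ _ tendsto_id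
      simpa [one_div, Pi.inv_def] using this.inv_tendsto_atTop
  have h2 := key.add_const (-(1/2))
  convert h2 using 2 with x
  · ring
  · ring

theorem stmt_0 (α β : ℝ) (hβ : 0 ≤ β)
    (h : LogCompletelyMonotonicOn
      (fun x : ℝ => x ^ (x + β - α) / (Real.exp x * Real.Gamma (x + β))) (Set.Ioi 0)) :
    (0 < β ∧ max β (1 / 2) ≤ α) ∨ (β = 0 ∧ 1 ≤ α) := by
  obtain ⟨hpos, hcd, hmono⟩ := h
  set g : ℝ → ℝ := fun y => Real.log (y ^ (y + β - α) / (Real.exp y * Real.Gamma (y + β)))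
    with hg_def
  have hgamma_pos : ∀ x : ℝ, 0 < x → 0 < Real.Gamma (x + β) := fun x hx =>
    Real.Gamma_pos_of_pos (by linarith)
  have gform : ∀ x : ℝ, 0 < x →
      g x = (x + β - α) * Real.log x - x - Real.log (Real.Gamma (x + β)) := by
    intro x hx
    have h1 : (0:ℝ) < Real.exp x * Real.Gamma (x + β) := mul_pos (Real.exp_pos x) (hgamma_pos x hx)
    rw [hg_def]
    simp only
    rw [Real.log_div (Real.rpow_pos_of_pos hx _).ne' h1.ne', Real.log_rpow hx,
      Real.log_mul (Real.exp_ne_zero x) (hgamma_pos x hx).ne', Real.log_exp]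
    ring
  -- differentiability and antitonicity of g
  have hgd : ∀ x ∈ Ioi (0:ℝ), DifferentiableAt ℝ g x := by
    intro x hx
    have hfx : DifferentiableAt ℝ
        (fun x : ℝ => x ^ (x + β - α) / (Real.exp x * Real.Gamma (x + β))) x :=
      (hcd.differentiableOn (by simp)).differentiableAt (isOpen_Ioi.mem_nhds hx)
    exact hfx.log (hpos x hx).ne'
  have hder : ∀ x ∈ Ioi (0:ℝ), deriv g x ≤ 0 := by
    intro x hx
    have h1 : 0 ≤ (-1:ℝ)^1 * iteratedDeriv 1 g x := hmono 1 le_rfl x hx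
    rw [iteratedDeriv_one] at h1
    simp only [pow_one, neg_one_mul] at h1
    linarith
  have hanti : AntitoneOn g (Ioi 0) := by
    apply antitoneOn_of_deriv_nonpos (convex_Ioi 0)
    · intro x hx; exact (hgd x hx).continuousAt.continuousWithinAt
    · rw [interior_Ioi]; intro x hx; exact (hgd x hx).differentiableWithinAt
    · rw [interior_Ioi]; exact hder
  -- Step 1 : α ≥ 1/2 via the discrete difference at infinity
  have hD : ∀ x : ℝ, 0 < x →
      (x+1+β-α) * Real.log (x+1) - (x+β-α) * Real.log x - 1 - Real.log (x+β) ≤ 0 := by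
    intro x hx
    have hxb : 0 < x + β := by linarith
    have h1 : g (x+1) ≤ g x := hanti (mem_Ioi.2 hx) (mem_Ioi.2 (by linarith)) (by linarith)
    rw [gform x hx, gform (x+1) (by linarith)] at h1
    have h2 : Real.Gamma (x+1+β) = (x+β) * Real.Gamma (x+β) := by
      rw [show x+1+β = (x+β)+1 by ring]
      exact Real.Gamma_add_one hxb.ne'
    rw [h2, Real.log_mul hxb.ne' (hgamma_pos x hx).ne'] at h1
    linarith
  have hxb_top : Tendsto (fun x : ℝ => x + β) atTop atTop :=
    tendsto_atTop_add_const_right _ _ tendsto_id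
  have hlim : Tendsto (fun x : ℝ =>
      x * ((x+1+β-α) * Real.log (x+1) - (x+β-α) * Real.log x - 1 - Real.log (x+β)))
      atTop (𝓝 (1/2 - α)) := by
    have l2 : Tendsto (fun x : ℝ => (β-α) * (x * Real.log (1+1/x))) atTop (𝓝 ((β-α)*1)) :=
      (Real.tendsto_mul_log_one_add_div_atTop 1).const_mul (β-α)
    have l3 : Tendsto (fun x : ℝ => x/(x+β)) atTop (𝓝 1) := by
      have hb0 : Tendsto (fun x : ℝ => β/(x+β)) atTop (𝓝 0) :=
        Tendsto.div_atTop tendsto_const_nhds hxb_top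
      have := (tendsto_const_nhds (x := (1:ℝ)) (f := atTop)).sub hb0
      rw [sub_zero] at this
      apply this.congr'
      filter_upwards [eventually_ge_atTop (1:ℝ)] with x hx
      have hxb : x + β ≠ 0 := (by linarith : (0:ℝ) < x + β).ne'
      field_simp
      ring
    have l4 : Tendsto (fun x : ℝ => (x+β) * Real.log (1+(1-β)/(x+β))) atTop (𝓝 (1-β)) :=
      (Real.tendsto_mul_log_one_add_div_atTop (1-β)).comp hxb_top
    have lsum := (aux_core.add l2).add (l3.mul l4)
    have hval : -(1/2) + (β-α)*1 + 1*(1-β) = 1/2 - α := by ring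
    rw [hval] at lsum
    apply lsum.congr'
    filter_upwards [eventually_ge_atTop (1:ℝ)] with x hx
    have hx0 : (0:ℝ) < x := by linarith
    have hxb : (0:ℝ) < x + β := by linarith
    have e1 : Real.log (1+1/x) = Real.log (x+1) - Real.log x := by
      rw [show (1:ℝ)+1/x = (x+1)/x by field_simp, Real.log_div (by linarith) hx0.ne']
    have e2 : Real.log (1+(1-β)/(x+β)) = Real.log (x+1) - Real.log (x+β) := by
      rw [show (1:ℝ)+(1-β)/(x+β) = (x+1)/(x+β) by field_simp; ring,
        Real.log_div (by linarith) hxb.ne']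
    rw [e1, e2]
    field_simp
    ring
  have hhalf : (1:ℝ)/2 ≤ α := by
    have hev : ∀ᶠ x : ℝ in atTop,
        x * ((x+1+β-α) * Real.log (x+1) - (x+β-α) * Real.log x - 1 - Real.log (x+β)) ≤ 0 := by
      filter_upwards [eventually_ge_atTop (1:ℝ)] with x hx
      exact mul_nonpos_of_nonneg_of_nonpos (by linarith) (hD x (by linarith))
    have := le_of_tendsto hlim hev
    linarith
  -- Step 2 : behaviour near 0
  have hcontr : ∀ c : ℝ, 0 < c → ∀ b : ℝ → ℝ, ∀ L : ℝ,
      Tendsto b (𝓝[>] (0:ℝ)) (𝓝 L) →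
      (∀ x : ℝ, 0 < x → x < 1 → g x = c * Real.log x + b x) → False := by
    intro c hc b L hb heq
    have hT : Tendsto (fun x => c * Real.log x + b x) (𝓝[>] (0:ℝ)) atBot :=
      tendsto_atBot_add_right_of_ge' _ (L+1)
        (Tendsto.const_mul_atBot hc Real.tendsto_log_nhdsGT_zero)
        (hb.eventually_le_const (lt_add_one L))
    have hg : Tendsto g (𝓝[>] (0:ℝ)) atBot := by
      apply hT.congr'
      filter_upwards [Ioo_mem_nhdsGT one_pos] with x hx
      exact (heq x hx.1 hx.2).symm
    have hev : ∀ᶠ x in 𝓝[>] (0:ℝ), g x < g 1 := hg.eventually (eventually_lt_atBot (g 1))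
    have hev2 : ∀ᶠ x in 𝓝[>] (0:ℝ), x ∈ Ioo (0:ℝ) 1 :=
      eventually_of_mem (Ioo_mem_nhdsGT one_pos) fun x hx => hx
    obtain ⟨x, hlt, hx01⟩ := (hev.and hev2).exists
    have := hanti (mem_Ioi.2 hx01.1) (mem_Ioi.2 one_pos) hx01.2.le
    linarith
  -- auxiliary limits near zero
  have t_xlogx : Tendsto (fun x : ℝ => x * Real.log x) (𝓝[>] (0:ℝ)) (𝓝 0) := by
    have := tendsto_log_mul_rpow_nhdsGT_zero (r := 1) one_pos
    simp only [Real.rpow_one] at this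
    simpa [mul_comm] using this
  have t_x : Tendsto (fun x : ℝ => x) (𝓝[>] (0:ℝ)) (𝓝 0) :=
    (continuous_id.tendsto 0).mono_left nhdsWithin_le_nhds
  have tgam : ∀ p : ℝ, 0 < p → Tendsto (fun x : ℝ => Real.log (Real.Gamma (x + p)))
      (𝓝[>] (0:ℝ)) (𝓝 (Real.log (Real.Gamma p))) := by
    intro p hp
    have hd : DifferentiableAt ℝ Real.Gamma p := Real.differentiableAt_Gamma (fun m => by
      have hm : (0:ℝ) ≤ (m:ℝ) := Nat.cast_nonneg m
      intro hc
      rw [hc] at hp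
      linarith)
    have hadd : ContinuousAt (fun x : ℝ => x + p) 0 := by fun_prop
    have hg2 : ContinuousAt (fun x : ℝ => Real.Gamma (x + p)) 0 := by
      have hd' : ContinuousAt Real.Gamma ((fun x : ℝ => x + p) 0) := by
        simpa using hd.continuousAt
      exact ContinuousAt.comp (g := Real.Gamma) (f := fun x : ℝ => x + p) (x := (0:ℝ)) hd' hadd
    have hne : Real.Gamma ((fun x : ℝ => x + p) 0) ≠ 0 := by
      simpa using (Real.Gamma_pos_of_pos hp).ne'
    have hc : ContinuousAt (fun x : ℝ => Real.log (Real.Gamma (x + p))) 0 := by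
      have hlog : ContinuousAt Real.log ((fun x : ℝ => Real.Gamma (x + p)) 0) :=
        Real.continuousAt_log hne
      exact ContinuousAt.comp (g := Real.log) (f := fun x : ℝ => Real.Gamma (x + p))
        (x := (0:ℝ)) hlog hg2
    have := hc.tendsto.mono_left (nhdsWithin_le_nhds (s := Ioi (0:ℝ)))
    simpa using this
  rcases hβ.lt_or_eq with hb | hb
  · left
    refine ⟨hb, max_le ?_ hhalf⟩
    by_contra hαβ
    push_neg at hαβ
    refine hcontr (β - α) (by linarith)
      (fun x => x * Real.log x - x - Real.log (Real.Gamma (x + β)))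
      (0 - 0 - Real.log (Real.Gamma β)) ?_ ?_
    · exact (t_xlogx.sub t_x).sub (tgam β hb)
    · intro x hx _
      rw [gform x hx]
      ring
  · right
    refine ⟨hb.symm, ?_⟩
    by_contra hα1
    push_neg at hα1
    refine hcontr (1 - α) (by linarith)
      (fun x => x * Real.log x - x - Real.log (Real.Gamma (x + 1)))
      (0 - 0 - Real.log (Real.Gamma 1)) ?_ ?_
    · exact (t_xlogx.sub t_x).sub (tgam 1 one_pos)
    · intro x hx _
      rw [gform x hx, ← hb]
      have h2 : Real.log (Real.Gamma x) = Real.log (Real.Gamma (x + 1)) - Real.log x := by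
        rw [Real.Gamma_add_one hx.ne',
          Real.log_mul hx.ne' (Real.Gamma_pos_of_pos hx).ne']
        ring
      rw [add_zero, h2]
      ring
end

section
/- Let α be a real number and β ≥ 1/2. The function f_{α,β,-1}(x) = x^{x+β-α} / (e^x Γ(x+β)) is logarithmically completely monotonic on (0,∞) if and only if α ≥ β. -/
open Real Set Filter Topology

namespace LCMAux

noncomputable def S (m : ℕ) (x : ℝ) : ℝ := ∑' k : ℕ, ((x + k) ^ m)⁻¹

noncomputable def psi (x : ℝ) : ℝ :=
  -Real.eulerMascheroniConstant - x⁻¹ + ∑' k : ℕ, ((k + 1 : ℝ)⁻¹ - (x + k + 1)⁻¹)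

lemma cast_pos (x : ℝ) (hx : 0 < x) (k : ℕ) : 0 < x + k :=
  add_pos_of_pos_of_nonneg hx (Nat.cast_nonneg k)

lemma summable_base (p : ℕ) (hp : 2 ≤ p) : Summable (fun k : ℕ => (((k : ℝ) + 1) ^ p)⁻¹) := by
  have h0 : Summable (fun k : ℕ => ((k : ℝ) ^ p)⁻¹) := by
    simpa [one_div] using Real.summable_one_div_nat_pow.mpr hp
  have := (summable_nat_add_iff 1).mpr h0
  simpa using this

lemma summable_S {m : ℕ} (hm : 2 ≤ m) {x : ℝ} (hx : 0 < x) :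
    Summable (fun k : ℕ => ((x + k) ^ m)⁻¹) := by
  rw [← summable_nat_add_iff 1]
  apply Summable.of_nonneg_of_le
    (fun k => (inv_pos.mpr (pow_pos (cast_pos x hx (k + 1)) m)).le)
    _ (summable_base m hm)
  intro k
  have hk1 : (1 : ℝ) ≤ (k : ℝ) + 1 := le_add_of_nonneg_left (Nat.cast_nonneg k)
  have h2 : ((k : ℝ) + 1) ^ 2 ≤ ((k : ℝ) + 1) ^ m := pow_le_pow_right₀ hk1 hm
  have h3 : ((k : ℝ) + 1) ^ m ≤ (x + ↑(k + 1)) ^ m := by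
    apply pow_le_pow_left₀ (by positivity)
    push_cast; linarith
  have h4 : (0 : ℝ) < ((k : ℝ) + 1) ^ m := by positivity
  exact inv_anti₀ h4 h3

lemma S_nonneg (m : ℕ) {x : ℝ} (hx : 0 < x) : 0 ≤ S m x :=
  tsum_nonneg fun k => (inv_pos.mpr (pow_pos (cast_pos x hx k) m)).le


lemma hasDerivAt_inv_pow (m : ℕ) {t : ℝ} (ht : 0 < t) :
    HasDerivAt (fun s : ℝ => (s ^ m)⁻¹) (-(m : ℝ) * (t ^ (m + 1))⁻¹) t := by
  have h := (hasDerivAt_pow m t).inv (pow_ne_zero m ht.ne')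
  refine h.congr_deriv (Eq.symm ?_)
  rcases Nat.eq_zero_or_pos m with hm | hm
  · subst hm; simp
  · have h1 : t ^ (m - 1) * t ^ (m + 1) = (t ^ m) ^ 2 := by
      rw [← pow_add, ← pow_mul]
      congr 1
      omega
    rw [← h1]
    field_simp

lemma hasDerivAt_inv_pow_shift (m : ℕ) (c : ℝ) {y : ℝ} (hy : 0 < y + c) :
    HasDerivAt (fun s : ℝ => ((s + c) ^ m)⁻¹) (-(m : ℝ) * ((y + c) ^ (m + 1))⁻¹) y := by
  simpa using (hasDerivAt_inv_pow m hy).comp_add_const y c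


lemma S_shift {m : ℕ} (hm : 2 ≤ m) {x : ℝ} (hx : 0 < x) :
    S m x = (x ^ m)⁻¹ + ∑' k : ℕ, ((x + k + 1) ^ m)⁻¹ := by
  rw [S, Summable.tsum_eq_zero_add (summable_S hm hx)]
  push_cast
  simp [add_assoc]

lemma hasDerivAt_S {m : ℕ} (hm : 2 ≤ m) {x : ℝ} (hx : 0 < x) :
    HasDerivAt (S m) (-(m : ℝ) * S (m + 1) x) x := by
  have hx2 : 0 < x / 2 := by linarith
  have key : HasDerivAt (fun z => ∑' k : ℕ, ((z + (k:ℝ)) ^ m)⁻¹)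
      (∑' k : ℕ, (-(m : ℝ) * ((x + (k:ℝ)) ^ (m + 1))⁻¹)) x := by
    apply hasDerivAt_tsum_of_isPreconnected
      (u := fun k : ℕ => (m : ℝ) * ((x / 2 + (k:ℝ)) ^ (m + 1))⁻¹)
      ((summable_S (by omega) hx2).mul_left _) isOpen_Ioi isPreconnected_Ioi
      (fun k y hy => hasDerivAt_inv_pow_shift m (k:ℝ)
        (cast_pos y (lt_trans hx2 hy) k))
      (fun k y hy => ?_) (mem_Ioi.mpr (by linarith : x / 2 < x))
      (summable_S hm hx) (mem_Ioi.mpr (by linarith : x / 2 < x))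
    have hy' : 0 < y + (k:ℝ) := cast_pos y (lt_trans hx2 hy) k
    have hy2 : 0 < x / 2 + (k:ℝ) := cast_pos _ hx2 k
    rw [norm_mul, norm_neg, Real.norm_natCast, Real.norm_eq_abs,
      abs_of_pos (inv_pos.mpr (pow_pos hy' _))]
    have hsle : (x / 2 + (k:ℝ)) ^ (m+1) ≤ (y + (k:ℝ)) ^ (m+1) :=
      pow_le_pow_left₀ hy2.le (by linarith [mem_Ioi.mp hy]) _
    exact mul_le_mul_of_nonneg_left (inv_anti₀ (pow_pos hy2 _) hsle) (Nat.cast_nonneg m)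
  rw [show (∑' k : ℕ, (-(m : ℝ) * ((x + (k:ℝ)) ^ (m + 1))⁻¹)) = -(m:ℝ) * S (m+1) x by
    rw [S, ← tsum_mul_left]] at key
  exact key

lemma summable_psi_term {x : ℝ} (hx : 0 ≤ x) :
    Summable (fun k : ℕ => ((k + 1 : ℝ)⁻¹ - (x + k + 1)⁻¹)) := by
  apply Summable.of_nonneg_of_le
    (fun k => by
      have h1 : (0:ℝ) < (k:ℝ) + 1 := by positivity
      have h3 : (k + 1 : ℝ) ≤ x + k + 1 := by linarith
      have := inv_anti₀ h1 h3
      linarith)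
    (fun k => ?_) ((summable_base 2 le_rfl).mul_left x)
  have h1 : (0:ℝ) < (k:ℝ) + 1 := by positivity
  have h2 : (0:ℝ) < x + k + 1 := by linarith
  rw [inv_sub_inv (by positivity) (by linarith),
    show x + (k:ℝ) + 1 - ((k:ℝ)+1) = x by ring,
    div_le_iff₀ (by nlinarith)]
  calc x = x * (((k:ℝ)+1)^2)⁻¹ * ((k:ℝ)+1)^2 := by field_simp
    _ ≤ x * (((k:ℝ)+1)^2)⁻¹ * (((k:ℝ)+1) * (x + (k:ℝ) + 1)) := by
        apply mul_le_mul_of_nonneg_left _ (by positivity)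
        rw [sq]
        exact mul_le_mul_of_nonneg_left (by linarith) (by positivity)

lemma hasDerivAt_psi {x : ℝ} (hx : 0 < x) : HasDerivAt psi (S 2 x) x := by
  have hx2 : 0 < x / 2 := by linarith
  have hu : Summable (fun k : ℕ => ((x / 2 + (k:ℝ) + 1) ^ 2)⁻¹) := by
    have := (summable_nat_add_iff 1).mpr (summable_S le_rfl hx2)
    apply this.congr
    intro k
    push_cast
    ring_nf
  have hg : ∀ (k : ℕ) (y : ℝ), y ∈ Ioi (x/2) →
      HasDerivAt (fun z : ℝ => (k + 1 : ℝ)⁻¹ - (z + (k:ℝ) + 1)⁻¹)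
        (((y + (k:ℝ) + 1) ^ 2)⁻¹) y := by
    intro k y hy
    have hy' : 0 < y + ((k:ℝ) + 1) := by
      have := cast_pos y (lt_trans hx2 (mem_Ioi.mp hy)) k; linarith
    have h3 := (hasDerivAt_inv_pow_shift 1 ((k:ℝ) + 1) hy').const_sub ((k + 1 : ℝ)⁻¹)
    simp only [pow_one] at h3
    have e1 : (fun s : ℝ => (k + 1 : ℝ)⁻¹ - (s + ((k:ℝ) + 1))⁻¹)
        = fun s : ℝ => (k + 1 : ℝ)⁻¹ - (s + (k:ℝ) + 1)⁻¹ := by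
      funext s; ring_nf
    rw [e1] at h3
    refine h3.congr_deriv (Eq.symm ?_)
    rw [show y + ((k:ℝ)+1) = y + (k:ℝ) + 1 by ring]
    ring
  have hb : ∀ (k : ℕ) (y : ℝ), y ∈ Ioi (x/2) →
      ‖((y + (k:ℝ) + 1) ^ 2)⁻¹‖ ≤ ((x / 2 + (k:ℝ) + 1) ^ 2)⁻¹ := by
    intro k y hy
    have hy' : 0 < y + ((k:ℝ) + 1) := by
      have := cast_pos y (lt_trans hx2 (mem_Ioi.mp hy)) k; linarith
    have hy2 : 0 < x / 2 + (k:ℝ) + 1 := by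
      have := cast_pos _ hx2 k; linarith
    rw [Real.norm_eq_abs,
      abs_of_pos (inv_pos.mpr (pow_pos (by linarith : (0:ℝ) < y + (k:ℝ) + 1) 2))]
    apply inv_anti₀ (pow_pos hy2 2)
    apply pow_le_pow_left₀ hy2.le
    have := mem_Ioi.mp hy; linarith
  have key : HasDerivAt (fun z => ∑' k : ℕ, ((k + 1 : ℝ)⁻¹ - (z + (k:ℝ) + 1)⁻¹))
      (∑' k : ℕ, ((x + (k:ℝ) + 1) ^ 2)⁻¹) x :=
    hasDerivAt_tsum_of_isPreconnected hu isOpen_Ioi isPreconnected_Ioi hg hb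
      (mem_Ioi.mpr (by linarith : x / 2 < x)) (summable_psi_term hx.le)
      (mem_Ioi.mpr (by linarith : x / 2 < x))
  have h4 : HasDerivAt (fun z : ℝ => z⁻¹) (-(x^2)⁻¹) x := hasDerivAt_inv hx.ne'
  have hd : HasDerivAt (fun z : ℝ => -Real.eulerMascheroniConstant - z⁻¹)
      ((x^2)⁻¹) x := by simpa using h4.const_sub (-Real.eulerMascheroniConstant)
  have htot := hd.add key
  rw [show (x^2)⁻¹ + (∑' k : ℕ, ((x + (k:ℝ) + 1) ^ 2)⁻¹) = S 2 x from
    (S_shift le_rfl hx).symm] at htot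
  exact htot

noncomputable def L : ℝ → ℝ := Real.log ∘ Real.Gamma

lemma ne_neg_nat {x : ℝ} (hx : 0 < x) : ∀ m : ℕ, x ≠ -m :=
  fun m => by have : (0:ℝ) ≤ m := Nat.cast_nonneg m; intro h; rw [h] at hx; linarith

lemma differentiableAt_L {x : ℝ} (hx : 0 < x) : DifferentiableAt ℝ L x := by
  have := (Real.differentiableAt_Gamma (ne_neg_nat hx)).log
    (Real.Gamma_ne_zero (ne_neg_nat hx))
  simpa [L, Function.comp_def] using this

lemma L_rec {x : ℝ} (hx : 0 < x) : L (x + 1) = L x + Real.log x := by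
  simp only [L, Function.comp_apply, Real.Gamma_add_one hx.ne',
    Real.log_mul hx.ne' (Real.Gamma_pos_of_pos hx).ne', add_comm]

lemma deriv_L_rec {x : ℝ} (hx : 0 < x) : deriv L (x + 1) = deriv L x + 1 / x := by
  rw [← deriv_comp_add_const, one_div, ← Real.deriv_log,
    ← deriv_add (differentiableAt_L hx) (Real.differentiableAt_log hx.ne')]
  apply Filter.EventuallyEq.deriv_eq
  filter_upwards [eventually_gt_nhds hx] with y hy
  exact L_rec hy

lemma deriv_L_le {x : ℝ} (hx : 0 < x) : deriv L x ≤ Real.log x := by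
  have hc : ConvexOn ℝ (Ioi 0) L := Real.convexOn_log_Gamma
  have h := hc.le_slope_of_hasDerivAt (mem_Ioi.mpr hx)
    (mem_Ioi.mpr (by linarith : (0:ℝ) < x + 1)) (by linarith)
    (differentiableAt_L hx).hasDerivAt
  rwa [slope_def_field, L_rec hx, show x + 1 - x = 1 by ring, add_sub_cancel_left,
    div_one] at h

lemma le_deriv_L {x : ℝ} (hx : 0 < x) : Real.log x - 1 / x ≤ deriv L x := by
  have hc : ConvexOn ℝ (Ioi 0) L := Real.convexOn_log_Gamma
  have h := hc.slope_le_of_hasDerivAt (mem_Ioi.mpr hx)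
    (mem_Ioi.mpr (by linarith : (0:ℝ) < x + 1)) (by linarith)
    (differentiableAt_L (by linarith : (0:ℝ) < x + 1)).hasDerivAt
  rw [slope_def_field, L_rec hx, show x + 1 - x = 1 by ring, add_sub_cancel_left,
    div_one] at h
  have h2 := deriv_L_rec hx
  linarith

lemma deriv_L_shift {x : ℝ} (hx : 0 < x) (n : ℕ) :
    deriv L (x + n) = deriv L x + ∑ k ∈ Finset.range n, (x + k)⁻¹ := by
  induction n with
  | zero => simp
  | succ n ih =>
    have hxn : 0 < x + n := cast_pos x hx n
    have h1 := deriv_L_rec hxn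
    rw [show x + ((n:ℕ)+1:ℕ) = (x + n) + 1 by push_cast; ring, h1, ih,
      Finset.sum_range_succ, one_div]
    ring

lemma harmonic_cast (n : ℕ) :
    ((harmonic n : ℚ) : ℝ) = ∑ k ∈ Finset.range n, ((k : ℝ) + 1)⁻¹ := by
  rw [harmonic]
  push_cast
  rfl

lemma tendsto_A {x : ℝ} (hx : 0 < x) :
    Tendsto (fun n : ℕ => Real.log (x + n) - ∑ k ∈ Finset.range n, (x + k)⁻¹)
      atTop (𝓝 (psi x)) := by
  rw [← Filter.tendsto_add_atTop_iff_nat 1]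
  have heq : ∀ n : ℕ, Real.log (x + ((n:ℕ)+1:ℕ)) - ∑ k ∈ Finset.range (n+1), (x + k)⁻¹
      = (∑ k ∈ Finset.range n, ((k+1:ℝ)⁻¹ - (x + k + 1)⁻¹))
        + (-(((harmonic n : ℚ) : ℝ) - Real.log n))
        + (Real.log ((n:ℝ) + (x+1)) - Real.log n)
        - x⁻¹ := by
    intro n
    rw [Finset.sum_range_succ', harmonic_cast, Finset.sum_sub_distrib]
    push_cast
    rw [show Real.log (x + ((n:ℝ) + 1)) = Real.log ((n:ℝ) + (x+1)) by ring_nf]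
    have : ∀ k ∈ Finset.range n, (x + ((k:ℝ)+1))⁻¹ = (x + (k:ℝ) + 1)⁻¹ := by
      intro k _; ring_nf
    rw [Finset.sum_congr rfl this]
    ring
  simp only [heq]
  have hB := ((summable_psi_term hx.le).hasSum).tendsto_sum_nat
  have hC := Real.tendsto_harmonic_sub_log.neg
  have hD := (Real.tendsto_log_comp_add_sub_log (x+1)).comp tendsto_natCast_atTop_atTop
  have htot := ((hB.add hC).add hD).sub_const x⁻¹
  have : psi x = (∑' k : ℕ, ((k + 1 : ℝ)⁻¹ - (x + k + 1)⁻¹))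
      + -Real.eulerMascheroniConstant + 0 - x⁻¹ := by
    rw [psi]; ring
  rw [this]
  exact htot

lemma deriv_L_eq_psi {x : ℝ} (hx : 0 < x) : deriv L x = psi x := by
  have h1 := tendsto_A hx
  have h2 : Tendsto (fun n : ℕ => Real.log (x + n) - ∑ k ∈ Finset.range n, (x + k)⁻¹)
      atTop (𝓝 (deriv L x)) := by
    have hAform : ∀ n : ℕ, Real.log (x + n) - ∑ k ∈ Finset.range n, (x + k)⁻¹
        = deriv L x - (deriv L (x + n) - Real.log (x + n)) := by
      intro n; rw [deriv_L_shift hx n]; ring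
    simp only [hAform]
    rw [show (𝓝 (deriv L x)) = 𝓝 (deriv L x - 0) by rw [sub_zero]]
    apply Tendsto.const_sub
    have hlow : Tendsto (fun n : ℕ => -(x + (n:ℝ))⁻¹) atTop (𝓝 0) := by
      have := (tendsto_atTop_add_const_left atTop x tendsto_natCast_atTop_atTop).inv_tendsto_atTop
      simpa using this.neg
    apply tendsto_of_tendsto_of_tendsto_of_le_of_le hlow tendsto_const_nhds
    · intro n
      show -(x + (n:ℝ))⁻¹ ≤ deriv L (x + (n:ℝ)) - Real.log (x + (n:ℝ))
      have hxn : 0 < x + (n:ℝ) := cast_pos x hx n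
      have := le_deriv_L hxn
      rw [one_div] at this
      linarith
    · intro n
      show deriv L (x + (n:ℝ)) - Real.log (x + (n:ℝ)) ≤ 0
      have hxn : 0 < x + (n:ℝ) := cast_pos x hx n
      have := deriv_L_le hxn
      linarith
  exact tendsto_nhds_unique h2 h1

lemma midpoint_pow_le {a b : ℝ} (ha : 0 < a) (hb : 0 < b) (j : ℕ) :
    2 * (((a + b) / 2) ^ j)⁻¹ ≤ (a ^ j)⁻¹ + (b ^ j)⁻¹ := by
  have hc := convexOn_zpow (𝕜 := ℝ) (-(j:ℤ))
  have h := hc.2 (mem_Ioi.mpr ha) (mem_Ioi.mpr hb)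
    (by norm_num : (0:ℝ) ≤ (1:ℝ)/2) (by norm_num : (0:ℝ) ≤ (1:ℝ)/2) (by norm_num)
  simp only [smul_eq_mul] at h
  rw [zpow_neg, zpow_neg, zpow_neg, zpow_natCast, zpow_natCast, zpow_natCast,
    show (1:ℝ)/2 * a + 1/2 * b = (a+b)/2 by ring] at h
  linarith

lemma key_telescope {c : ℝ} (hc : 0 < c) {m : ℕ} (hm : 1 ≤ m) :
    (m:ℝ) * (((c + 1/2) ^ (m+1))⁻¹) ≤ (c ^ m)⁻¹ - ((c + 1) ^ m)⁻¹ := by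
  set s : ℝ := c + 1/2 with hs
  have hs0 : 0 < s := by rw [hs]; linarith
  set r : ℝ → ℝ :=
    fun u => ((s - u) ^ m)⁻¹ - ((s + u) ^ m)⁻¹ - 2*(m:ℝ)*((s^(m+1))⁻¹)*u with hr
  have hder : ∀ u ∈ Icc (0:ℝ) (1/2), HasDerivAt r
      ((m:ℝ)*(((s-u)^(m+1))⁻¹) + (m:ℝ)*(((s+u)^(m+1))⁻¹) - 2*(m:ℝ)*((s^(m+1))⁻¹)) u := by
    intro u hu
    obtain ⟨hu0, hu2⟩ := hu
    have h1 : 0 < s - u := by rw [hs]; linarith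
    have h2 : 0 < s + u := by linarith
    have d1 : HasDerivAt (fun v : ℝ => ((s - v) ^ m)⁻¹) ((m:ℝ)*(((s-u)^(m+1))⁻¹)) u := by
      have hin : HasDerivAt (fun v : ℝ => s - v) (-1) u := by
        simpa using (hasDerivAt_id u).const_sub s
      have := (hasDerivAt_inv_pow m h1).comp u hin
      refine this.congr_deriv (Eq.symm ?_)
      ring
    have d2 : HasDerivAt (fun v : ℝ => ((s + v) ^ m)⁻¹) (-(m:ℝ)*(((s+u)^(m+1))⁻¹)) u := by
      have hin : HasDerivAt (fun v : ℝ => s + v) 1 u := by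
        simpa using (hasDerivAt_id u).const_add s
      have := (hasDerivAt_inv_pow m h2).comp u hin
      refine this.congr_deriv (Eq.symm ?_)
      ring
    have d3 : HasDerivAt (fun v : ℝ => 2*(m:ℝ)*((s^(m+1))⁻¹)*v)
        (2*(m:ℝ)*((s^(m+1))⁻¹)) u := by
      simpa using (hasDerivAt_id u).const_mul (2*(m:ℝ)*((s^(m+1))⁻¹))
    have := (d1.sub d2).sub d3
    refine this.congr_deriv (Eq.symm ?_)
    ring
  have hmono : MonotoneOn r (Icc (0:ℝ) (1/2)) := by
    apply monotoneOn_of_deriv_nonneg (convex_Icc 0 (1/2))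
      (fun u hu => (hder u hu).continuousAt.continuousWithinAt)
      (fun u hu => ((hder u (interior_subset hu)).differentiableAt).differentiableWithinAt)
    intro u hu
    rw [(hder u (interior_subset hu)).deriv]
    rw [interior_Icc] at hu
    have h1 : 0 < s - u := by rw [hs]; cases hu; linarith
    have h2 : 0 < s + u := by cases hu; linarith
    have hmid := midpoint_pow_le h1 h2 (m+1)
    rw [show ((s - u) + (s + u)) / 2 = s by ring] at hmid
    have hm0 : (0:ℝ) ≤ m := Nat.cast_nonneg m
    nlinarith [hmid]
  have h := hmono (left_mem_Icc.mpr (by norm_num)) (right_mem_Icc.mpr (by norm_num))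
    (by norm_num)
  have hr0 : r 0 = 0 := by rw [hr]; simp
  have hr2 : r (1/2) = (c ^ m)⁻¹ - ((c + 1) ^ m)⁻¹ - (m:ℝ)*((s^(m+1))⁻¹) := by
    rw [hr]
    simp only
    rw [show s - 1/2 = c by rw [hs]; ring, show s + 1/2 = c + 1 by rw [hs]; ring]
    ring
  rw [hr0, hr2] at h
  rw [hs] at h ⊢
  linarith

lemma sum_range_bound {x : ℝ} (hx : 0 < x) {m : ℕ} (hm : 1 ≤ m) (N : ℕ) :
    ∑ k ∈ Finset.range N, ((x + 1/2 + (k:ℝ)) ^ (m+1))⁻¹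
      ≤ ((m:ℝ))⁻¹ * ((x ^ m)⁻¹ - ((x + (N:ℝ)) ^ m)⁻¹) := by
  have hm0 : (0:ℝ) < m := by exact_mod_cast hm
  induction N with
  | zero => simp
  | succ N ih =>
    rw [Finset.sum_range_succ]
    have hc : 0 < x + (N:ℝ) := cast_pos x hx N
    have hk := key_telescope hc hm
    have ht : ((x + 1/2 + (N:ℝ)) ^ (m+1))⁻¹
        ≤ ((m:ℝ))⁻¹ * (((x + (N:ℝ)) ^ m)⁻¹ - ((x + (N:ℝ) + 1) ^ m)⁻¹) := by
      rw [show x + 1/2 + (N:ℝ) = (x + (N:ℝ)) + 1/2 by ring]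
      rw [le_inv_mul_iff₀ hm0]
      linarith
    have hcast : x + ((N:ℕ)+1:ℕ) = x + (N:ℝ) + 1 := by push_cast; ring
    rw [hcast]
    calc ∑ k ∈ Finset.range N, ((x + 1/2 + (k:ℝ)) ^ (m+1))⁻¹
          + ((x + 1/2 + (N:ℝ)) ^ (m+1))⁻¹
        ≤ ((m:ℝ))⁻¹ * ((x ^ m)⁻¹ - ((x + (N:ℝ)) ^ m)⁻¹)
          + ((m:ℝ))⁻¹ * (((x + (N:ℝ)) ^ m)⁻¹ - ((x + (N:ℝ) + 1) ^ m)⁻¹) :=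
          add_le_add ih ht
      _ = ((m:ℝ))⁻¹ * ((x ^ m)⁻¹ - ((x + (N:ℝ) + 1) ^ m)⁻¹) := by ring

lemma S_bound {x b : ℝ} (hx : 0 < x) (hb : 1/2 ≤ b) {m : ℕ} (hm : 1 ≤ m) :
    S (m+1) (x + b) ≤ ((m:ℝ))⁻¹ * (x ^ m)⁻¹ := by
  have h2 : 2 ≤ m + 1 := by omega
  have hxb : 0 < x + b := by linarith
  have hx2 : 0 < x + 1/2 := by linarith
  have hm0 : (0:ℝ) < m := by exact_mod_cast hm
  have hstep : S (m+1) (x + b) ≤ S (m+1) (x + 1/2) := by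
    apply Summable.tsum_le_tsum _ (summable_S h2 hxb) (summable_S h2 hx2)
    intro k
    exact inv_anti₀ (pow_pos (cast_pos _ hx2 k) _)
      (pow_le_pow_left₀ (cast_pos _ hx2 k).le (by linarith) _)
  refine hstep.trans ?_
  apply Real.tsum_le_of_sum_range_le
    (fun k => (inv_pos.mpr (pow_pos (cast_pos _ hx2 k) _)).le)
  intro N
  have := sum_range_bound hx hm N
  have hcl : (0:ℝ) ≤ ((x + (N:ℝ)) ^ m)⁻¹ :=
    (inv_pos.mpr (pow_pos (cast_pos _ hx N) _)).le
  calc ∑ k ∈ Finset.range N, ((x + 1/2 + (k:ℝ)) ^ (m+1))⁻¹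
      ≤ ((m:ℝ))⁻¹ * ((x ^ m)⁻¹ - ((x + (N:ℝ)) ^ m)⁻¹) := this
    _ ≤ ((m:ℝ))⁻¹ * (x ^ m)⁻¹ := by
        apply mul_le_mul_of_nonneg_left _ (by positivity)
        linarith

lemma psi_le_log {x : ℝ} (hx : 0 < x) : psi x ≤ Real.log x :=
  deriv_L_eq_psi hx ▸ deriv_L_le hx

lemma log_sub_le_psi {x : ℝ} (hx : 0 < x) : Real.log x - 1 / x ≤ psi x :=
  deriv_L_eq_psi hx ▸ le_deriv_L hx

lemma psi_ge_log {b : ℝ} (hb : 1/2 ≤ b) {x : ℝ} (hx : 0 < x) :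
    Real.log x ≤ psi (x + b) := by
  have hb0 : 0 < b := lt_of_lt_of_le (by norm_num) hb
  set d : ℝ → ℝ := fun y => psi (y + b) - Real.log y with hd
  have hders : ∀ y ∈ Ioi (0:ℝ), HasDerivAt d (S 2 (y + b) - y⁻¹) y := by
    intro y hy
    have hy0 := mem_Ioi.mp hy
    have hyb : 0 < y + b := by linarith
    have h1 : HasDerivAt (fun z : ℝ => psi (z + b)) (S 2 (y+b)) y :=
      (hasDerivAt_psi hyb).comp_add_const y b
    exact h1.sub (Real.hasDerivAt_log hy0.ne')
  have hanti : AntitoneOn d (Ioi (0:ℝ)) := by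
    apply antitoneOn_of_deriv_nonpos (convex_Ioi 0)
      (fun y hy => (hders y hy).continuousAt.continuousWithinAt)
      (by rw [interior_Ioi]; exact fun y hy =>
        (hders y hy).differentiableAt.differentiableWithinAt)
    rw [interior_Ioi]
    intro y hy
    rw [(hders y hy).deriv]
    have hy0 := mem_Ioi.mp hy
    have hS := S_bound hy0 hb (le_refl 1)
    simp only [Nat.cast_one, inv_one, one_mul, pow_one] at hS
    linarith
  have hlim : Tendsto d atTop (𝓝 0) := by
    have hlow : Tendsto (fun y : ℝ => (Real.log (y + b) - Real.log y) - (y+b)⁻¹)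
        atTop (𝓝 0) := by
      have h2 : Tendsto (fun y : ℝ => (y + b)⁻¹) atTop (𝓝 0) :=
        (tendsto_atTop_add_const_right atTop b tendsto_id).inv_tendsto_atTop
      simpa using (Real.tendsto_log_comp_add_sub_log b).sub h2
    apply tendsto_of_tendsto_of_tendsto_of_le_of_le' hlow
      (Real.tendsto_log_comp_add_sub_log b)
    · filter_upwards [eventually_gt_atTop (0:ℝ)] with y hy
      have hyb : 0 < y + b := by linarith
      have := log_sub_le_psi hyb
      rw [one_div] at this
      simp only [hd]
      linarith
    · filter_upwards [eventually_gt_atTop (0:ℝ)] with y hy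
      have hyb : 0 < y + b := by linarith
      have := psi_le_log hyb
      simp only [hd]
      linarith
  have hev : ∀ᶠ y in atTop, d y ≤ d x := by
    filter_upwards [eventually_ge_atTop x, eventually_gt_atTop (0:ℝ)] with y hy1 hy2
    exact hanti (mem_Ioi.mpr hx) (mem_Ioi.mpr hy2) hy1
  have h0 : (0:ℝ) ≤ d x := le_of_tendsto hlim hev
  simp only [hd] at h0
  linarith

noncomputable def G (a b : ℝ) : ℝ → ℝ :=
  fun x => (x + (b - a)) * Real.log x - x - L (x + b)

noncomputable def PsiF (a b : ℝ) (j : ℕ) : ℝ → ℝ := fun x =>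
  (-1)^j * (Nat.factorial j : ℝ) * (x^(j+1))⁻¹ - (b-a) * (-1)^j * (Nat.factorial (j+1) : ℝ) * (x^(j+2))⁻¹
    - (-1)^j * (Nat.factorial (j+1) : ℝ) * S (j+2) (x+b)

lemma hG1 {a b x : ℝ} (hb : 0 < b) (hx : 0 < x) :
    HasDerivAt (G a b) (Real.log x + (b-a)*x⁻¹ - psi (x+b)) x := by
  have hxb : 0 < x + b := by linarith
  have p1 : HasDerivAt (fun y : ℝ => (y + (b - a)) * Real.log y)
      (1 * Real.log x + (x + (b-a)) * x⁻¹) x :=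
    ((hasDerivAt_id x).add_const (b-a)).mul (Real.hasDerivAt_log hx.ne')
  have p3 : HasDerivAt (fun y : ℝ => L (y + b)) (psi (x+b)) x := by
    have h := (differentiableAt_L hxb).hasDerivAt
    rw [deriv_L_eq_psi hxb] at h
    exact h.comp_add_const x b
  have htot := (p1.sub (hasDerivAt_id x)).sub p3
  refine htot.congr_deriv (Eq.symm ?_)
  field_simp
  ring

lemma hPsiF_deriv {a b x : ℝ} (hb : 0 < b) (hx : 0 < x) (j : ℕ) :
    HasDerivAt (PsiF a b j) (PsiF a b (j+1) x) x := by
  have hxb : 0 < x + b := by linarith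
  have t1 : HasDerivAt (fun y : ℝ => (-1:ℝ)^j * (Nat.factorial j : ℝ) * (y^(j+1))⁻¹)
      ((-1:ℝ)^j * (Nat.factorial j : ℝ) * (-((j:ℝ)+1) * (x^(j+2))⁻¹)) x := by
    have := (hasDerivAt_inv_pow (j+1) hx).const_mul ((-1:ℝ)^j * (Nat.factorial j : ℝ))
    refine this.congr_deriv (Eq.symm ?_)
    push_cast
    ring
  have t2 : HasDerivAt (fun y : ℝ => (b-a) * (-1:ℝ)^j * (Nat.factorial (j+1) : ℝ) * (y^(j+2))⁻¹)
      ((b-a) * (-1:ℝ)^j * (Nat.factorial (j+1) : ℝ) * (-((j:ℝ)+2) * (x^(j+3))⁻¹)) x := by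
    have := (hasDerivAt_inv_pow (j+2) hx).const_mul ((b-a) * (-1:ℝ)^j * (Nat.factorial (j+1) : ℝ))
    refine this.congr_deriv (Eq.symm ?_)
    push_cast
    ring
  have t3 : HasDerivAt (fun y : ℝ => (-1:ℝ)^j * (Nat.factorial (j+1) : ℝ) * S (j+2) (y+b))
      ((-1:ℝ)^j * (Nat.factorial (j+1) : ℝ) * (-((j:ℝ)+2) * S (j+3) (x+b))) x := by
    have hS := (hasDerivAt_S (by omega : 2 ≤ j+2) hxb).comp_add_const x b
    have := hS.const_mul ((-1:ℝ)^j * (Nat.factorial (j+1) : ℝ))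
    refine this.congr_deriv (Eq.symm ?_)
    push_cast
    ring
  have htot := (t1.sub t2).sub t3
  refine htot.congr_deriv (Eq.symm ?_)
  simp only [PsiF]
  push_cast [Nat.factorial_succ]
  ring

lemma deriv_G {a b : ℝ} (hb : 0 < b) :
    ∀ x ∈ Ioi (0:ℝ), deriv (G a b) x = Real.log x + (b-a)*x⁻¹ - psi (x+b) :=
  fun _ hx => (hG1 hb (mem_Ioi.mp hx)).deriv

lemma iteratedDeriv_G {a b : ℝ} (hb : 0 < b) (j : ℕ) :
    ∀ x ∈ Ioi (0:ℝ), iteratedDeriv (j+2) (G a b) x = PsiF a b j x := by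
  induction j with
  | zero =>
    intro x hx
    have hx0 := mem_Ioi.mp hx
    have hxb : 0 < x + b := by linarith
    rw [show (0+2 : ℕ) = 1 + 1 by rfl, iteratedDeriv_succ, iteratedDeriv_one]
    have hev : deriv (G a b) =ᶠ[𝓝 x] fun y => Real.log y + (b-a)*y⁻¹ - psi (y+b) := by
      filter_upwards [isOpen_Ioi.mem_nhds hx] with y hy
      exact deriv_G hb y hy
    rw [hev.deriv_eq]
    have d1 : HasDerivAt (fun y : ℝ => Real.log y + (b-a)*y⁻¹ - psi (y+b))
        (x⁻¹ + (b-a) * (-(x^2)⁻¹) - S 2 (x+b)) x := by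
      exact ((Real.hasDerivAt_log hx0.ne').add
        ((hasDerivAt_inv hx0.ne').const_mul (b-a))).sub
        ((hasDerivAt_psi hxb).comp_add_const x b)
    rw [d1.deriv]
    simp only [PsiF]
    norm_num
    ring
  | succ j ih =>
    intro x hx
    have hx0 := mem_Ioi.mp hx
    rw [show j+1+2 = (j+2)+1 by ring, iteratedDeriv_succ]
    have hev : iteratedDeriv (j+2) (G a b) =ᶠ[𝓝 x] PsiF a b j := by
      filter_upwards [isOpen_Ioi.mem_nhds hx] with y hy
      exact ih y hy
    rw [hev.deriv_eq, (hPsiF_deriv hb hx0 j).deriv]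

lemma logf_eq {a b : ℝ} (hb : 0 < b) :
    Set.EqOn (fun y : ℝ => Real.log (y ^ (y + b - a) / (Real.exp y * Real.Gamma (y + b))))
      (G a b) (Ioi 0) := by
  intro y hy
  have hy0 := mem_Ioi.mp hy
  have hyb : 0 < y + b := by linarith
  have hG := Real.Gamma_pos_of_pos hyb
  simp only
  rw [Real.log_div (Real.rpow_pos_of_pos hy0 _).ne' (by positivity),
    Real.log_mul (Real.exp_ne_zero y) hG.ne', Real.log_exp, Real.log_rpow hy0]
  simp only [G, L, Function.comp_apply]
  ring

lemma analyticAt_re_comp {F : ℂ → ℂ} {x : ℝ}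
    (hF : ∀ z : ℂ, 0 < z.re → DifferentiableAt ℂ F z) (hx : 0 < x) :
    AnalyticAt ℝ (fun y : ℝ => (F y).re) x := by
  have hopen : IsOpen {z : ℂ | 0 < z.re} := isOpen_lt continuous_const Complex.continuous_re
  have hA : AnalyticAt ℂ F ((x : ℂ)) := by
    apply DifferentiableOn.analyticAt (s := {z : ℂ | 0 < z.re})
      (fun z hz => (hF z hz).differentiableWithinAt)
      (hopen.mem_nhds (by simpa using hx))
  have h2 : AnalyticAt ℝ (fun y : ℝ => F y) x :=
    hA.restrictScalars.comp (Complex.ofRealCLM.analyticAt x)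
  have h3 := AnalyticAt.comp (f := fun y : ℝ => F (y:ℂ)) (x := x)
    (Complex.reCLM.analyticAt (F (x:ℂ))) h2
  simpa [Function.comp_def] using h3

lemma analyticAt_Gamma {t : ℝ} (ht : 0 < t) : AnalyticAt ℝ Real.Gamma t := by
  have h := analyticAt_re_comp (F := Complex.Gamma) (fun z hz =>
    Complex.differentiableAt_Gamma z (fun m => by
      intro hc
      rw [hc] at hz
      simp only [Complex.neg_re, Complex.natCast_re] at hz
      have : (0:ℝ) ≤ m := Nat.cast_nonneg m
      linarith)) ht
  have : (fun y : ℝ => (Complex.Gamma y).re) = Real.Gamma := by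
    funext y
    rw [Complex.Gamma_ofReal]
    exact Complex.ofReal_re _
  rwa [this] at h

lemma analyticAt_rlog {t : ℝ} (ht : 0 < t) : AnalyticAt ℝ Real.log t := by
  have h := analyticAt_re_comp (F := Complex.log) (fun z hz =>
    Complex.differentiableAt_log (Or.inl hz)) ht
  have : (fun y : ℝ => (Complex.log y).re) = Real.log := by
    funext y
    exact Complex.log_ofReal_re y
  rwa [this] at h

lemma contDiff_f (a b : ℝ) (hb : 0 < b) :
    ContDiffOn ℝ (⊤ : ℕ∞)
      (fun x : ℝ => x ^ (x + b - a) / (Real.exp x * Real.Gamma (x + b))) (Ioi 0) := by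
  apply AnalyticOnNhd.contDiffOn _ isOpen_Ioi.uniqueDiffOn
  intro x hx
  have hx0 := mem_Ioi.mp hx
  have hxb : 0 < x + b := by linarith
  have hg : AnalyticAt ℝ
      (fun y : ℝ => Real.exp (Real.log y * (y + b - a)) / (Real.exp y * Real.Gamma (y + b))) x := by
    apply AnalyticAt.div
    · exact ((analyticAt_rlog hx0).mul
        (((analyticAt_id).add analyticAt_const).sub analyticAt_const)).rexp
    · have hinner : AnalyticAt ℝ (fun y : ℝ => y + b) x := by
        have h := (analyticAt_id (𝕜 := ℝ) (z := x)).add (analyticAt_const (v := b))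
        exact h
      have hcomp := AnalyticAt.comp (f := fun y : ℝ => y + b) (x := x)
        (analyticAt_Gamma hxb) hinner
      have hG2 : AnalyticAt ℝ (fun y : ℝ => Real.Gamma (y + b)) x := by
        simpa [Function.comp_def] using hcomp
      exact analyticAt_rexp.mul hG2
    · exact (mul_pos (Real.exp_pos x) (Real.Gamma_pos_of_pos hxb)).ne'
  apply hg.congr
  filter_upwards [isOpen_Ioi.mem_nhds hx] with y hy
  rw [Real.rpow_def_of_pos (mem_Ioi.mp hy)]

end LCMAux

open Real Set

theorem stmt_1 (α β : ℝ) (hβ : 1 / 2 ≤ β) :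
    LogCompletelyMonotonicOn
      (fun x : ℝ => x ^ (x + β - α) / (Real.exp x * Real.Gamma (x + β))) (Set.Ioi 0)
      ↔ β ≤ α := by
  have hb0 : (0:ℝ) < β := by linarith
  constructor
  · intro h
    obtain ⟨hpos, hsm, hmono⟩ := h
    by_contra hcon
    push_neg at hcon
    have key : ∀ x : ℝ, 0 < x → (β - α) ≤ x * (LCMAux.psi (x + β) - Real.log x) := by
      intro x hx
      have h1 := hmono 1 le_rfl x (mem_Ioi.mpr hx)
      rw [pow_one, iteratedDeriv_one] at h1
      have heq : deriv (fun y : ℝ =>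
          Real.log (y ^ (y + β - α) / (Real.exp y * Real.Gamma (y + β)))) x
          = Real.log x + (β - α) * x⁻¹ - LCMAux.psi (x + β) := by
        have hev : (fun y : ℝ =>
            Real.log (y ^ (y + β - α) / (Real.exp y * Real.Gamma (y + β))))
            =ᶠ[𝓝 x] LCMAux.G α β := by
          filter_upwards [isOpen_Ioi.mem_nhds (mem_Ioi.mpr hx)] with y hy
          exact LCMAux.logf_eq hb0 hy
        rw [hev.deriv_eq]
        exact LCMAux.deriv_G hb0 x (mem_Ioi.mpr hx)
      rw [show (fun y : ℝ => Real.log ((fun x : ℝ =>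
        x ^ (x + β - α) / (Real.exp x * Real.Gamma (x + β))) y))
        = fun y : ℝ => Real.log (y ^ (y + β - α) / (Real.exp y * Real.Gamma (y + β)))
        from rfl, heq] at h1
      have h2 : (β - α) * x⁻¹ ≤ LCMAux.psi (x + β) - Real.log x := by linarith
      calc β - α = ((β - α) * x⁻¹) * x := by field_simp
        _ ≤ (LCMAux.psi (x + β) - Real.log x) * x := mul_le_mul_of_nonneg_right h2 hx.le
        _ = x * (LCMAux.psi (x + β) - Real.log x) := by ring
    have hlim : Tendsto (fun x : ℝ => x * (LCMAux.psi (x + β) - Real.log x))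
        (𝓝[>] (0:ℝ)) (𝓝 0) := by
      have t1 : Tendsto (fun x : ℝ => x * LCMAux.psi (x + β)) (𝓝[>] (0:ℝ)) (𝓝 0) := by
        have hc : ContinuousAt (fun x : ℝ => LCMAux.psi (x + β)) 0 := by
          have hD := (LCMAux.hasDerivAt_psi (x := 0 + β)
            (by simpa using hb0)).comp_add_const 0 β
          exact hD.continuousAt
        have h5 := (continuousAt_id.mul hc).tendsto
        have h6 := h5.mono_left (nhdsWithin_le_nhds (s := Ioi (0:ℝ)))
        simp at h6; exact h6
      have t2 : Tendsto (fun x : ℝ => x * Real.log x) (𝓝[>] (0:ℝ)) (𝓝 0) := by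
        apply Filter.Tendsto.congr' _ (tendsto_log_mul_rpow_nhdsGT_zero one_pos)
        filter_upwards [self_mem_nhdsWithin] with y hy
        rw [Real.rpow_one]
        ring
      have h7 := t1.sub t2
      rw [sub_zero] at h7
      apply h7.congr (fun x => by ring)
    have hfin : β - α ≤ 0 := ge_of_tendsto hlim (by
      filter_upwards [self_mem_nhdsWithin] with x hx using key x (mem_Ioi.mp hx))
    linarith
  · intro hba
    refine ⟨?_, LCMAux.contDiff_f α β hb0, ?_⟩
    · intro x hx
      have hx0 := mem_Ioi.mp hx
      have h1 := Real.rpow_pos_of_pos hx0 (x + β - α)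
      have h2 := Real.Gamma_pos_of_pos (by linarith : (0:ℝ) < x + β)
      have h3 := Real.exp_pos x
      positivity
    · intro n hn x hx
      have hx0 := mem_Ioi.mp hx
      have hEq2 : iteratedDeriv n (fun y : ℝ => Real.log ((fun x : ℝ =>
          x ^ (x + β - α) / (Real.exp x * Real.Gamma (x + β))) y)) x
          = iteratedDeriv n (LCMAux.G α β) x :=
        ((LCMAux.logf_eq (a := α) (b := β) hb0).iteratedDeriv_of_isOpen isOpen_Ioi n) hx
      rw [hEq2]
      rcases n with _ | n2
      · omega
      rcases n2 with _ | j
      · rw [pow_one, iteratedDeriv_one, LCMAux.deriv_G hb0 x hx]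
        have hpg := LCMAux.psi_ge_log hβ hx0
        have hmn : (β - α) * x⁻¹ ≤ 0 :=
          mul_nonpos_of_nonpos_of_nonneg (by linarith) (inv_nonneg.mpr hx0.le)
        nlinarith
      · rw [LCMAux.iteratedDeriv_G hb0 j x hx]
        simp only [LCMAux.PsiF]
        have hS' : LCMAux.S (j+2) (x+β) ≤ ((j:ℝ)+1)⁻¹ * (x^(j+1))⁻¹ := by
          have hS := LCMAux.S_bound hx0 hβ (by omega : 1 ≤ j+1)
          push_cast at hS
          exact hS
        have hfac : (Nat.factorial (j+1) : ℝ) = ((j:ℝ)+1) * (Nat.factorial j) := by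
          rw [Nat.factorial_succ]; push_cast; ring
        have hxp1 : (0:ℝ) < (x^(j+1))⁻¹ := inv_pos.mpr (pow_pos hx0 _)
        have hxp2 : (0:ℝ) ≤ (x^(j+2))⁻¹ := (inv_pos.mpr (pow_pos hx0 _)).le
        have hsgn : ((-1:ℝ)^(j+2)) * ((-1:ℝ)^j) = 1 := by
          rw [← pow_add]
          have heven : Even (j+2+j) := ⟨j+1, by ring⟩
          exact Even.neg_one_pow heven
        have hSpos : 0 ≤ LCMAux.S (j+2) (x+β) := LCMAux.S_nonneg _ (by linarith)
        have hC : (Nat.factorial (j+1) : ℝ) * LCMAux.S (j+2) (x+β)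
            ≤ (Nat.factorial j : ℝ) * (x^(j+1))⁻¹ := by
          have h4 := mul_le_mul_of_nonneg_left hS'
            (by positivity : (0:ℝ) ≤ (Nat.factorial (j+1) : ℝ))
          rw [hfac] at h4
          have hj1 : ((j:ℝ)+1) ≠ 0 := by positivity
          have h5 : ((j:ℝ)+1) * (Nat.factorial j : ℝ) * (((j:ℝ)+1)⁻¹ * (x^(j+1))⁻¹)
              = (Nat.factorial j : ℝ) * (x^(j+1))⁻¹ := by
            field_simp
          rw [h5] at h4
          rw [hfac]
          exact h4
        have expand : ((-1:ℝ)^(j+2)) * ((-1:ℝ)^j * (Nat.factorial j : ℝ) * (x^(j+1))⁻¹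
              - (β-α) * (-1:ℝ)^j * (Nat.factorial (j+1) : ℝ) * (x^(j+2))⁻¹
              - (-1:ℝ)^j * (Nat.factorial (j+1) : ℝ) * LCMAux.S (j+2) (x+β))
            = (Nat.factorial j : ℝ) * (x^(j+1))⁻¹
              - (β-α) * (Nat.factorial (j+1) : ℝ) * (x^(j+2))⁻¹
              - (Nat.factorial (j+1) : ℝ) * LCMAux.S (j+2) (x+β) := by
          linear_combination ((Nat.factorial j : ℝ) * (x^(j+1))⁻¹
              - (β-α) * (Nat.factorial (j+1) : ℝ) * (x^(j+2))⁻¹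
              - (Nat.factorial (j+1) : ℝ) * LCMAux.S (j+2) (x+β)) * hsgn
        rw [expand]
        have hmid : 0 ≤ -((β-α) * (Nat.factorial (j+1) : ℝ) * (x^(j+2))⁻¹) := by
          apply neg_nonneg.mpr
          apply mul_nonpos_of_nonpos_of_nonneg _ hxp2
          apply mul_nonpos_of_nonpos_of_nonneg (by linarith) (Nat.cast_nonneg _)
        linarith
end

section
/- For every x > 0 and every integer k ≥ 1, the double inequality (k−1)!/x^k + k!/(2x^{k+1}) ≤ (−1)^{k+1} ψ^{(k)}(x) ≤ (k−1)!/x^k + k!/x^{k+1} holds. -/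
open Real

/-- The polygamma function `ψ^{(k)}`: the `k`-th derivative of the digamma function,
i.e. the `(k+1)`-st derivative of `ln ∘ Γ`. -/
noncomputable def polygamma (k : ℕ) : ℝ → ℝ :=
  iteratedDeriv (k + 1) (fun x : ℝ => Real.log (Real.Gamma x))

/-!
For `x > 0` and `k ≥ 1`, `(-1)^(k+1) ψ^{(k)}(x) = k! ∑ₙ 1/(x+n)^(k+1)`. Indeed, the recurrence
`ψ(x+1) = ψ(x) + 1/x` together with the monotonicity of `ψ` (log-convexity of `Γ`) gives
`ψ(x) = ψ(1) + ∑ₙ (1/(1+n) - 1/(x+n))`, a series that may be differentiated termwise.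

The bounds then follow by telescoping: with `φ(y) = y^(-k) + (k/2) y^(-k-1)`, resp.
`φ(y) = y^(-k) + k y^(-k-1)`, each term `k/(x+n)^(k+1)` dominates, resp. is dominated by,
`φ(x+n) - φ(x+n+1)`. Both comparisons are the trapezoid and the right-endpoint estimates of
`∫ k t^(-k-1) dt = a^(-k) - b^(-k)` over `[a, b] = [x+n, x+n+1]`, valid because `t^(-k-1)` is
convex and decreasing.
-/

open Filter Topology Set
open scoped Nat

lemma pow_succ_add_mul_sub_le {a b : ℝ} (ha : 0 ≤ a) (hb : 0 ≤ b) (n : ℕ) :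
    a ^ (n + 1) + (n + 1) * a ^ n * (b - a) ≤ b ^ (n + 1) := by
  induction n with
  | zero => simp
  | succ n ih =>
    have h := mul_nonneg (by positivity : (0 : ℝ) ≤ n + 1)
      (mul_nonneg (pow_nonneg ha n) (sq_nonneg (b - a)))
    push_cast
    linear_combination mul_le_mul_of_nonneg_left ih hb + h

lemma two_mul_mul_pow_sub_pow_le {a b : ℝ} (ha : 0 ≤ a) (hab : a ≤ b) (k : ℕ) :
    2 * a * b * (b ^ k - a ^ k) ≤ k * (b - a) * (a ^ (k + 1) + b ^ (k + 1)) := by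
  induction k with
  | zero => simp
  | succ k ih =>
    have h := pow_succ_add_mul_sub_le ha (ha.trans hab) (k + 1)
    push_cast at h ⊢
    linear_combination mul_le_mul_of_nonneg_left ih (ha.trans hab) +
      mul_le_mul_of_nonneg_left h (sub_nonneg.2 hab)

lemma mul_sub_div_pow_succ_le {a b : ℝ} (ha : 0 < a) (hb : 0 < b) (k : ℕ) :
    k * (b - a) / b ^ (k + 1) ≤ 1 / a ^ k - 1 / b ^ k := by
  have h := pow_succ_add_mul_sub_le ha.le hb.le k
  rw [div_sub_div _ _ (by positivity) (by positivity),
    div_le_div_iff₀ (by positivity) (by positivity)]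
  simp only [pow_succ] at h ⊢
  nlinarith [mul_le_mul_of_nonneg_left h (pow_nonneg hb.le k)]

lemma one_div_pow_sub_one_div_pow_le {a b : ℝ} (ha : 0 < a) (hab : a ≤ b) (k : ℕ) :
    1 / a ^ k - 1 / b ^ k ≤ k * (b - a) / 2 * (1 / a ^ (k + 1) + 1 / b ^ (k + 1)) := by
  have hb : 0 < b := ha.trans_le hab
  have h := two_mul_mul_pow_sub_pow_le ha.le hab k
  rw [div_sub_div _ _ (by positivity) (by positivity),
    div_add_div _ _ (by positivity) (by positivity), div_mul_div_comm,
    div_le_div_iff₀ (by positivity) (by positivity)]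
  rw [pow_succ, pow_succ] at h ⊢
  nlinarith [mul_le_mul_of_nonneg_left h (by positivity : (0 : ℝ) ≤ a ^ k * b ^ k)]

lemma tsum_le_of_le_sub_succ {f u : ℕ → ℝ} (hf : Summable f) (hu : Tendsto u atTop (𝓝 0))
    (h : ∀ n, f n ≤ u n - u (n + 1)) : ∑' n, f n ≤ u 0 := by
  refine le_of_tendsto_of_tendsto' hf.hasSum.tendsto_sum_nat
    (by simpa using tendsto_const_nhds.sub hu) fun N => ?_
  rw [← Finset.sum_range_sub']
  exact Finset.sum_le_sum fun n _ => h n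

lemma le_tsum_of_sub_succ_le {f u : ℕ → ℝ} (hf : Summable f) (hu : Tendsto u atTop (𝓝 0))
    (h : ∀ n, u n - u (n + 1) ≤ f n) : u 0 ≤ ∑' n, f n := by
  have := tsum_le_of_le_sub_succ hf.neg (by simpa using hu.neg) (u := fun n => -u n)
    fun n => by linarith [h n]
  rwa [tsum_neg, neg_le_neg_iff] at this

lemma summable_one_div_add_pow (x : ℝ) {p : ℕ} (hp : 2 ≤ p) :
    Summable fun n : ℕ => 1 / (x + n) ^ p := by
  have h := (Real.summable_one_div_nat_add_rpow x p).2 (by exact_mod_cast hp)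
  refine .of_norm (h.congr fun n => ?_)
  rw [Real.rpow_natCast, norm_div, norm_one, norm_pow, Real.norm_eq_abs, add_comm]

lemma tendsto_one_div_add_pow_atTop (x : ℝ) {p : ℕ} (hp : p ≠ 0) :
    Tendsto (fun n : ℕ => 1 / (x + n) ^ p) atTop (𝓝 0) :=
  ((tendsto_pow_atTop hp).comp (tendsto_atTop_add_const_left _ x
    tendsto_natCast_atTop_atTop)).inv_tendsto_atTop.congr fun n => by simp

lemma norm_one_div_add_pow_le {c y : ℝ} (hc : 0 < c) (hcy : c < y) (n p : ℕ) :
    ‖1 / (y + n) ^ p‖ ≤ 1 / (c + n) ^ p := by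
  have hcn : 0 < c + n := add_pos_of_pos_of_nonneg hc n.cast_nonneg
  have hyn : 0 < y + n := by linarith
  rw [Real.norm_of_nonneg (by positivity)]
  gcongr

lemma hasDerivAt_one_div_add_pow (p : ℕ) (c : ℝ) {y : ℝ} (hy : y + c ≠ 0) :
    HasDerivAt (fun z => 1 / (z + c) ^ p) (-p / (y + c) ^ (p + 1)) y := by
  simp only [one_div]
  refine ((((hasDerivAt_id' y).add_const c).fun_pow p).fun_inv
    (pow_ne_zero p hy)).congr_deriv ?_
  rcases p with _ | p
  · simp
  · rw [Nat.add_sub_cancel]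
    field_simp
    ring

-- The Hurwitz zeta value `ζ(p, x)`; for `p ≤ 1` the series diverges and `tsum` returns `0`.
noncomputable def hurwitzSeries (p : ℕ) (x : ℝ) : ℝ := ∑' n : ℕ, 1 / (x + n) ^ p

lemma hasDerivAt_hurwitzSeries {p : ℕ} (hp : 2 ≤ p) {x : ℝ} (hx : 0 < x) :
    HasDerivAt (hurwitzSeries p) (-p * hurwitzSeries (p + 1) x) x := by
  have hc : 0 < x / 2 := half_pos hx
  have hderiv := hasDerivAt_tsum_of_isPreconnected
    ((summable_one_div_add_pow (x / 2) (p := p + 1) (by omega)).mul_left (p : ℝ)) isOpen_Ioi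
    isPreconnected_Ioi (g := fun (n : ℕ) (z : ℝ) => 1 / (z + n) ^ p)
    (fun n y (hy : x / 2 < y) => hasDerivAt_one_div_add_pow p n
      (add_pos_of_pos_of_nonneg (hc.trans hy) n.cast_nonneg).ne')
    (fun n y (hy : x / 2 < y) => by
      rw [← mul_one_div, norm_mul, norm_neg, Real.norm_natCast]
      exact mul_le_mul_of_nonneg_left (norm_one_div_add_pow_le hc hy n _) p.cast_nonneg)
    (half_lt_self hx) (summable_one_div_add_pow x hp) (half_lt_self hx)
  unfold hurwitzSeries
  rw [← tsum_mul_left]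
  simpa only [mul_one_div] using hderiv

lemma iteratedDeriv_hurwitzSeries {p : ℕ} (hp : 2 ≤ p) (j : ℕ) {x : ℝ} (hx : 0 < x) :
    iteratedDeriv j (hurwitzSeries p) x
      = (-1) ^ j * p.ascFactorial j * hurwitzSeries (p + j) x := by
  induction j generalizing x with
  | zero => simp
  | succ j ih =>
    have hev : iteratedDeriv j (hurwitzSeries p) =ᶠ[𝓝 x]
        fun y => (-1) ^ j * p.ascFactorial j * hurwitzSeries (p + j) y :=
      eventually_of_mem (isOpen_Ioi.mem_nhds hx) fun y hy => ih hy
    rw [iteratedDeriv_succ, hev.deriv_eq,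
      ((hasDerivAt_hurwitzSeries (by omega) hx).const_mul _).deriv, Nat.ascFactorial_succ]
    push_cast
    ring_nf

lemma le_mul_hurwitzSeries {k : ℕ} (hk : k ≠ 0) {x : ℝ} (hx : 0 < x) :
    1 / x ^ k + k / 2 * (1 / x ^ (k + 1)) ≤ k * hurwitzSeries (k + 1) x := by
  rw [hurwitzSeries, ← tsum_mul_left]
  refine le_tsum_of_sub_succ_le
    (u := fun n : ℕ => 1 / (x + n) ^ k + k / 2 * (1 / (x + n) ^ (k + 1)))
    ((summable_one_div_add_pow x (by omega)).mul_left _) ?_ (fun n => ?_) |>.trans_eq' (by simp)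
  · simpa using (tendsto_one_div_add_pow_atTop x hk).add
      ((tendsto_one_div_add_pow_atTop x k.add_one_ne_zero).const_mul (k / 2 : ℝ))
  · have h := one_div_pow_sub_one_div_pow_le (by positivity : 0 < x + n)
      (le_add_of_nonneg_right zero_le_one) k
    rw [add_sub_cancel_left, mul_one] at h
    simp only [Nat.cast_succ, ← add_assoc]
    linarith

lemma mul_hurwitzSeries_le {k : ℕ} (hk : k ≠ 0) {x : ℝ} (hx : 0 < x) :
    k * hurwitzSeries (k + 1) x ≤ 1 / x ^ k + k * (1 / x ^ (k + 1)) := by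
  rw [hurwitzSeries, ← tsum_mul_left]
  refine tsum_le_of_le_sub_succ
    (u := fun n : ℕ => 1 / (x + n) ^ k + k * (1 / (x + n) ^ (k + 1)))
    ((summable_one_div_add_pow x (by omega)).mul_left _) ?_ (fun n => ?_) |>.trans_eq (by simp)
  · simpa using (tendsto_one_div_add_pow_atTop x hk).add
      ((tendsto_one_div_add_pow_atTop x k.add_one_ne_zero).const_mul (k : ℝ))
  · have h := mul_sub_div_pow_succ_le (by positivity : 0 < x + n)
      (by positivity : 0 < x + n + 1) k
    rw [add_sub_cancel_left, mul_one] at h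
    simp only [Nat.cast_succ, ← add_assoc, mul_one_div]
    linarith

local notation "ψ" => deriv fun x : ℝ => log (Gamma x)

lemma differentiableAt_log_Gamma {x : ℝ} (hx : 0 < x) :
    DifferentiableAt ℝ (fun x => log (Gamma x)) x :=
  (differentiableAt_Gamma fun m => by linarith [m.cast_nonneg (α := ℝ)]).log
    (Gamma_pos_of_pos hx).ne'

lemma digamma_add_one {x : ℝ} (hx : 0 < x) : ψ (x + 1) = ψ x + 1 / x := by
  rw [← deriv_comp_add_const, one_div, ← Real.deriv_log,
    ← deriv_add (differentiableAt_log_Gamma hx) (differentiableAt_log hx.ne')]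
  refine EventuallyEq.deriv_eq
    (eventually_of_mem (isOpen_Ioi.mem_nhds hx) fun y (hy : 0 < y) => ?_)
  show log (Gamma (y + 1)) = log (Gamma y) + log y
  rw [Gamma_add_one hy.ne', log_mul hy.ne' (Gamma_pos_of_pos hy).ne', add_comm]

lemma digamma_add_nat {x : ℝ} (hx : 0 < x) (N : ℕ) :
    ψ (x + N) = ψ x + ∑ i ∈ Finset.range N, 1 / (x + i) := by
  induction N with
  | zero => simp
  | succ N ih =>
    rw [Nat.cast_succ, ← add_assoc, digamma_add_one (by positivity), ih, Finset.sum_range_succ,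
      add_assoc]

lemma monotoneOn_digamma : MonotoneOn ψ (Ioi 0) :=
  convexOn_log_Gamma.monotoneOn_deriv fun _ hx => differentiableAt_log_Gamma hx

lemma digamma_sub_le {x y : ℝ} (hx : 0 < x) (hy : 0 < y) {m : ℕ} (hxy : x ≤ y + m) :
    ψ x - ψ y ≤ m / y := by
  have hmono := monotoneOn_digamma hx (show 0 < y + m by positivity) hxy
  have hsum : ∑ i ∈ Finset.range m, 1 / (y + i) ≤ m / y :=
    calc ∑ i ∈ Finset.range m, 1 / (y + i) ≤ ∑ _i ∈ Finset.range m, 1 / y :=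
          Finset.sum_le_sum fun i _ => by gcongr; exact le_add_of_nonneg_right i.cast_nonneg
      _ = m / y := by simp [div_eq_mul_inv]
  rw [digamma_add_nat hy] at hmono
  linarith

lemma tendsto_digamma_add_nat_sub {x y : ℝ} (hx : 0 < x) (hy : 0 < y) :
    Tendsto (fun N : ℕ => ψ (x + N) - ψ (y + N)) atTop (𝓝 0) := by
  have hzero (z c : ℝ) : Tendsto (fun N : ℕ => c / (z + N)) atTop (𝓝 0) :=
    tendsto_const_nhds.div_atTop (tendsto_atTop_add_const_left _ z tendsto_natCast_atTop_atTop)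
  refine tendsto_of_tendsto_of_tendsto_of_le_of_le (by simpa using (hzero x ⌈y⌉₊).neg)
    (hzero y ⌈x⌉₊) (fun N => ?_) (fun N => ?_)
  · have := digamma_sub_le (x := y + N) (y := x + N) (m := ⌈y⌉₊) (by positivity) (by positivity)
      (by linarith [Nat.le_ceil y])
    linarith
  · exact digamma_sub_le (by positivity) (by positivity) (by linarith [Nat.le_ceil x])

lemma hasDerivAt_sub_one_div_add (a c : ℝ) {y : ℝ} (hy : y + c ≠ 0) :
    HasDerivAt (fun z => a - 1 / (z + c)) (1 / (y + c) ^ 2) y := by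
  simpa [neg_div] using (hasDerivAt_one_div_add_pow 1 c hy).const_sub a

-- Summability is carried over from `x = 1`, where every term vanishes.
lemma summable_one_div_sub_one_div {x : ℝ} (hx : 0 < x) :
    Summable fun n : ℕ => 1 / (1 + n) - 1 / (x + n) := by
  have hc : 0 < min x 1 / 2 := by positivity
  exact summable_of_summable_hasDerivAt_of_isPreconnected (y₀ := 1)
    (summable_one_div_add_pow (min x 1 / 2) le_rfl) isOpen_Ioi isPreconnected_Ioi
    (fun n y (hy : _ < y) => hasDerivAt_sub_one_div_add _ n
      (add_pos_of_pos_of_nonneg (hc.trans hy) n.cast_nonneg).ne')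
    (fun n y hy => norm_one_div_add_pow_le hc hy n 2)
    (show min x 1 / 2 < 1 by linarith [min_le_right x 1]) (by simp)
    (show min x 1 / 2 < x by linarith [min_le_left x 1])

lemma hasDerivAt_tsum_one_div_sub_one_div {x : ℝ} (hx : 0 < x) :
    HasDerivAt (fun y : ℝ => ∑' n : ℕ, (1 / (1 + n) - 1 / (y + n))) (hurwitzSeries 2 x) x := by
  have hc : 0 < x / 2 := half_pos hx
  exact hasDerivAt_tsum_of_isPreconnected (summable_one_div_add_pow (x / 2) le_rfl) isOpen_Ioi
    isPreconnected_Ioi (fun n y (hy : _ < y) => hasDerivAt_sub_one_div_add _ n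
      (add_pos_of_pos_of_nonneg (hc.trans hy) n.cast_nonneg).ne')
    (fun n y hy => norm_one_div_add_pow_le hc hy n 2) (half_lt_self hx)
    (summable_one_div_sub_one_div hx) (half_lt_self hx)

lemma hasSum_one_div_sub_one_div {x : ℝ} (hx : 0 < x) :
    HasSum (fun n : ℕ => 1 / (1 + n) - 1 / (x + n)) (ψ x - ψ 1) := by
  have hsum := summable_one_div_sub_one_div hx
  have hpartial : Tendsto (fun N => ∑ n ∈ Finset.range N, (1 / (1 + n) - 1 / (x + n))) atTop
      (𝓝 (ψ x - ψ 1)) := by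
    have h := (tendsto_digamma_add_nat_sub hx one_pos).const_sub (ψ x - ψ 1)
    rw [sub_zero] at h
    refine h.congr fun N => ?_
    rw [Finset.sum_sub_distrib, digamma_add_nat hx, digamma_add_nat one_pos]
    ring
  rw [← tendsto_nhds_unique hsum.hasSum.tendsto_sum_nat hpartial]
  exact hsum.hasSum

lemma hasDerivAt_digamma {x : ℝ} (hx : 0 < x) : HasDerivAt ψ (hurwitzSeries 2 x) x := by
  have hev : (fun y : ℝ => ψ 1 + ∑' n : ℕ, (1 / (1 + n) - 1 / (y + n))) =ᶠ[𝓝 x] ψ :=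
    eventually_of_mem (isOpen_Ioi.mem_nhds hx) fun y (hy : 0 < y) => by
      show ψ 1 + _ = ψ y
      rw [(hasSum_one_div_sub_one_div hy).tsum_eq]
      ring
  exact ((hasDerivAt_tsum_one_div_sub_one_div hx).const_add _).congr_of_eventuallyEq hev.symm

lemma polygamma_succ (j : ℕ) {x : ℝ} (hx : 0 < x) :
    polygamma (j + 1) x = (-1) ^ j * (j + 1)! * hurwitzSeries (j + 2) x := by
  have hev : deriv ψ =ᶠ[𝓝 x] hurwitzSeries 2 :=
    eventually_of_mem (isOpen_Ioi.mem_nhds hx) fun y (hy : 0 < y) => (hasDerivAt_digamma hy).deriv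
  have hfac : (2 : ℕ).ascFactorial j = (j + 1)! := by
    simpa [add_comm] using Nat.factorial_mul_ascFactorial 1 j
  rw [polygamma, iteratedDeriv_succ', iteratedDeriv_succ', hev.iteratedDeriv_eq,
    iteratedDeriv_hurwitzSeries le_rfl j hx, hfac, add_comm 2 j]

theorem stmt_3 (x : ℝ) (hx : 0 < x) (k : ℕ) (hk : 1 ≤ k) :
    (Nat.factorial (k - 1) : ℝ) / x ^ k + (Nat.factorial k : ℝ) / (2 * x ^ (k + 1))
      ≤ (-1 : ℝ) ^ (k + 1) * polygamma k x ∧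
    (-1 : ℝ) ^ (k + 1) * polygamma k x
      ≤ (Nat.factorial (k - 1) : ℝ) / x ^ k + (Nat.factorial k : ℝ) / x ^ (k + 1) := by
  obtain ⟨j, rfl⟩ : ∃ j, k = j + 1 := ⟨k - 1, by omega⟩
  have hval : (-1 : ℝ) ^ (j + 1 + 1) * polygamma (j + 1) x
      = j ! * ((j + 1 : ℕ) * hurwitzSeries (j + 1 + 1) x) := by
    rw [polygamma_succ j hx, ← mul_assoc, ← mul_assoc, ← pow_add,
      Even.neg_one_pow ⟨j + 1, by ring⟩, Nat.factorial_succ]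
    push_cast
    ring
  have hfac : (0 : ℝ) ≤ j ! := Nat.cast_nonneg _
  have hlower := mul_le_mul_of_nonneg_left (le_mul_hurwitzSeries j.add_one_ne_zero hx) hfac
  have hupper := mul_le_mul_of_nonneg_left (mul_hurwitzSeries_le j.add_one_ne_zero hx) hfac
  rw [hval, Nat.add_sub_cancel, Nat.factorial_succ]
  refine ⟨Eq.trans_le ?_ hlower, hupper.trans_eq ?_⟩ <;> push_cast <;> ring
end

section
/- Let β > 0. Then for every x > 0 and every integer k ≥ 2 the inequality (−1)^k ψ^{(k−1)}(x + β) ≥ (k−2)!/x^{k−1} − β·(k−1)!/x^k holds. -/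
/-!
Differentiating the Euler–Gauss approximants `logGammaSeq` of `log Γ` term by term and passing to
the limit (the derivatives converge locally uniformly on `(0, ∞)`) gives
`ψ⁽ⁿ⁾(y) = (-1)ⁿ⁺¹ n! ∑ₘ (y + m)⁻⁽ⁿ⁺¹⁾` for `n ≥ 1`. Bounding each term below by
`((y + m)⁻ⁿ - (y + m + 1)⁻ⁿ) / n` and telescoping yields `(-1)ⁿ⁺¹ ψ⁽ⁿ⁾(y) ≥ (n - 1)! / yⁿ`; at
`y = x + β` the tangent-line inequality `(x + β)⁻ⁿ ≥ x⁻ⁿ - n β x⁻ⁿ⁻¹` for the convex function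
`t ↦ t⁻ⁿ` finishes the proof.
-/

open Real

open Filter Set Topology
open scoped Nat

theorem inv_pow_sub_le_inv_add_pow {x h : ℝ} (hx : 0 < x) (hh : 0 ≤ h) (m : ℕ) :
    (x ^ m)⁻¹ - m * h * (x ^ (m + 1))⁻¹ ≤ ((x + h) ^ m)⁻¹ := by
  have hxh : 0 < x + h := by linarith
  have bernoulli : 1 - m * (h / (x + h)) ≤ (x / (x + h)) ^ m := by
    have hle : h / (x + h) ≤ 1 := (div_le_one hxh).2 (by linarith)
    have := one_add_mul_le_pow (a := -(h / (x + h))) (by linarith) m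
    have hsplit : x / (x + h) = 1 + -(h / (x + h)) := by field_simp; ring
    rw [hsplit]
    linarith
  calc (x ^ m)⁻¹ - m * h * (x ^ (m + 1))⁻¹ = (1 - m * (h / x)) / x ^ m := by
        field_simp; ring
    _ ≤ (1 - m * (h / (x + h))) / x ^ m := by gcongr; linarith
    _ ≤ (x / (x + h)) ^ m / x ^ m := by gcongr
    _ = ((x + h) ^ m)⁻¹ := by rw [div_pow]; field_simp

theorem summable_inv_add_pow (y : ℝ) {k : ℕ} (hk : 2 ≤ k) :
    Summable fun m : ℕ ↦ ((y + m) ^ k)⁻¹ := by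
  refine Summable.of_norm ?_
  have := (Real.summable_one_div_nat_add_rpow y k).2 (by exact_mod_cast hk)
  simpa [add_comm] using this

theorem inv_pow_le_mul_tsum_inv_add_pow {y : ℝ} (hy : 0 < y) {p : ℕ} (hp : p ≠ 0) :
    (y ^ p)⁻¹ ≤ p * ∑' m : ℕ, ((y + m) ^ (p + 1))⁻¹ := by
  set c : ℕ → ℝ := fun m ↦ ((y + m) ^ p)⁻¹
  have hstep (m : ℕ) : c m - c (m + 1) ≤ p * ((y + m) ^ (p + 1))⁻¹ := by
    have := inv_pow_sub_le_inv_add_pow (x := y + m) (by positivity) zero_le_one p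
    simp only [c, Nat.cast_succ, ← add_assoc]
    linarith
  have hc : Tendsto c atTop (𝓝 0) :=
    tendsto_inv_atTop_zero.comp <| (tendsto_pow_atTop hp).comp <|
      tendsto_atTop_add_const_left _ y tendsto_natCast_atTop_atTop
  have hsum := (summable_inv_add_pow y (k := p + 1) (by omega)).mul_left (p : ℝ)
  have hlim : Tendsto (fun n ↦ c 0 - c n) atTop (𝓝 (c 0)) := by
    simpa using tendsto_const_nhds.sub hc
  have hc0 : c 0 = (y ^ p)⁻¹ := by simp [c]
  refine hc0 ▸ le_of_tendsto' hlim fun n ↦ ?_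
  calc c 0 - c n = ∑ m ∈ Finset.range n, (c m - c (m + 1)) := (Finset.sum_range_sub' c n).symm
    _ ≤ ∑ m ∈ Finset.range n, p * ((y + m) ^ (p + 1))⁻¹ := Finset.sum_le_sum fun m _ ↦ hstep m
    _ ≤ ∑' m : ℕ, p * ((y + m) ^ (p + 1))⁻¹ :=
      hsum.sum_le_tsum _ fun m _ ↦ by positivity
    _ = p * ∑' m : ℕ, ((y + m) ^ (p + 1))⁻¹ := tsum_mul_left

theorem eqOn_iterate_deriv_of_tendstoLocallyUniformlyOn {ι 𝕜 E : Type*} {l : Filter ι} [l.NeBot]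
    [NontriviallyNormedField 𝕜] [IsRCLikeNormedField 𝕜] [NormedAddCommGroup E] [NormedSpace 𝕜 E]
    {s : Set 𝕜} (hs : IsOpen s) {F : ℕ → ι → 𝕜 → E} {f : ℕ → 𝕜 → E}
    (hF : ∀ k n, ∀ x ∈ s, HasDerivAt (F k n) (F (k + 1) n x) x)
    (hF_zero : ∀ x ∈ s, Tendsto (fun n ↦ F 0 n x) l (𝓝 (f 0 x)))
    (hF_succ : ∀ k, TendstoLocallyUniformlyOn (F (k + 1)) (f (k + 1)) l s) (k : ℕ) :
    EqOn (deriv^[k] (f 0)) (f k) s := by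
  induction k with
  | zero => exact fun _ _ ↦ rfl
  | succ k ih =>
    intro x hx
    have hF_k : ∀ y ∈ s, Tendsto (fun n ↦ F k n y) l (𝓝 (f k y)) := by
      cases k with
      | zero => exact hF_zero
      | succ k => exact fun y hy ↦ (hF_succ k).tendsto_at hy
    rw [Function.iterate_succ_apply', (ih.eventuallyEq_of_mem (hs.mem_nhds hx)).deriv_eq]
    exact (hasDerivAt_of_tendstoLocallyUniformlyOn hs (hF_succ k) (.of_forall (hF k)) hF_k hx).deriv

theorem tendstoLocallyUniformlyOn_Ioi_of_Icc {ι β : Type*} [UniformSpace β] {p : Filter ι}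
    {F : ι → ℝ → β} {f : ℝ → β} (h : ∀ a b : ℝ, 0 < a → TendstoUniformlyOn F f p (Icc a b)) :
    TendstoLocallyUniformlyOn F f p (Ioi 0) := by
  refine tendstoLocallyUniformlyOn_of_forall_exists_nhds fun x (hx : 0 < x) ↦ ?_
  refine ⟨Icc (x / 2) (2 * x), mem_nhdsWithin_of_mem_nhds (Icc_mem_nhds ?_ ?_), h _ _ ?_⟩ <;>
    linarith

-- The `(k + 1)`-st derivative of `y ↦ -log y`.
noncomputable def negLogDeriv (k : ℕ) (y : ℝ) : ℝ := (-1) ^ (k + 1) * k ! * (y ^ (k + 1))⁻¹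

theorem negLogDeriv_zero (y : ℝ) : negLogDeriv 0 y = -y⁻¹ := by simp [negLogDeriv]

theorem abs_negLogDeriv (k : ℕ) (y : ℝ) : |negLogDeriv k y| = k ! * (|y| ^ (k + 1))⁻¹ := by
  simp [negLogDeriv, abs_mul]

theorem hasDerivAt_negLogDeriv (k : ℕ) {y : ℝ} (hy : y ≠ 0) :
    HasDerivAt (negLogDeriv k) (negLogDeriv (k + 1) y) y := by
  refine (((hasDerivAt_pow (k + 1) y).inv (pow_ne_zero _ hy)).const_mul
    ((-1) ^ (k + 1) * k ! : ℝ)).congr_deriv ?_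
  simp only [negLogDeriv, Nat.factorial_succ, Nat.add_sub_cancel]
  push_cast
  field_simp
  ring

noncomputable def logGammaSeqDeriv : ℕ → ℕ → ℝ → ℝ
  | 0, n, y => BohrMollerup.logGammaSeq y n
  | 1, n, y => log n + ∑ m ∈ Finset.range (n + 1), negLogDeriv 0 (y + m)
  | k + 2, n, y => ∑ m ∈ Finset.range (n + 1), negLogDeriv (k + 1) (y + m)

noncomputable def logGammaDerivSeries : ℕ → ℝ → ℝ
  | 0, y => log (Gamma y)
  | 1, y => -eulerMascheroniConstant - y⁻¹ + ∑' m : ℕ, (((m : ℝ) + 1)⁻¹ - (y + ((m : ℝ) + 1))⁻¹)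
  | k + 2, y => ∑' m : ℕ, negLogDeriv (k + 1) (y + m)

theorem hasDerivAt_logGammaSeqDeriv (k n : ℕ) {y : ℝ} (hy : 0 < y) :
    HasDerivAt (logGammaSeqDeriv k n) (logGammaSeqDeriv (k + 1) n y) y := by
  have hsum (k : ℕ) : HasDerivAt (fun z ↦ ∑ m ∈ Finset.range (n + 1), negLogDeriv k (z + m))
      (∑ m ∈ Finset.range (n + 1), negLogDeriv (k + 1) (y + m)) y :=
    HasDerivAt.fun_sum fun m _ ↦
      ((hasDerivAt_negLogDeriv k (by positivity)).comp_add_const y m)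
  match k with
  | 0 =>
    have hlog : HasDerivAt (fun z ↦ ∑ m ∈ Finset.range (n + 1), log (z + m))
        (∑ m ∈ Finset.range (n + 1), (y + m)⁻¹) y :=
      HasDerivAt.fun_sum fun m _ ↦ ((hasDerivAt_id y).add_const (m : ℝ)).log (by positivity)
          |>.congr_deriv (one_div _)
    refine ((((hasDerivAt_id y).mul_const (log n)).add_const (log n !)).sub hlog).congr_deriv ?_
    simp [logGammaSeqDeriv, negLogDeriv_zero, sub_eq_add_neg]
  | 1 => exact (hsum 0).const_add (log n)
  | k + 2 => exact hsum (k + 1)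

theorem tendsto_log_sub_sum_inv :
    Tendsto (fun n : ℕ ↦ log n - ∑ m ∈ Finset.range n, ((m : ℝ) + 1)⁻¹) atTop
      (𝓝 (-eulerMascheroniConstant)) := by
  simpa [harmonic, neg_sub] using tendsto_harmonic_sub_log.neg

theorem logGammaSeqDeriv_one_eq (n : ℕ) (y : ℝ) :
    logGammaSeqDeriv 1 n y = log n - ∑ m ∈ Finset.range n, ((m : ℝ) + 1)⁻¹ - y⁻¹
      + ∑ m ∈ Finset.range n, (((m : ℝ) + 1)⁻¹ - (y + ((m : ℝ) + 1))⁻¹) := by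
  simp only [logGammaSeqDeriv, negLogDeriv_zero, Finset.sum_range_succ', Finset.sum_sub_distrib,
    Finset.sum_neg_distrib]
  push_cast
  ring

theorem tendstoLocallyUniformlyOn_logGammaSeqDeriv_one :
    TendstoLocallyUniformlyOn (logGammaSeqDeriv 1) (logGammaDerivSeries 1) atTop (Ioi 0) := by
  refine tendstoLocallyUniformlyOn_Ioi_of_Icc fun a b ha ↦ ?_
  have hconst := tendsto_log_sub_sum_inv.tendstoUniformlyOn_const (Icc a b)
  have hfixed : TendstoUniformlyOn (fun (_ : ℕ) (y : ℝ) ↦ y⁻¹) (·⁻¹) atTop (Icc a b) :=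
    fun _ hu ↦ .of_forall fun _ _ _ ↦ refl_mem_uniformity hu
  have hseries := tendstoUniformlyOn_tsum_nat ((summable_inv_add_pow 1 le_rfl).mul_left b)
    (f := fun m y ↦ ((m : ℝ) + 1)⁻¹ - (y + ((m : ℝ) + 1))⁻¹) (s := Icc a b) fun m y hy ↦ by
      have hm : (0 : ℝ) < m + 1 := by positivity
      have hy₀ : 0 < y := ha.trans_le hy.1
      rw [Real.norm_eq_abs, abs_of_nonneg (sub_nonneg.2 (inv_anti₀ hm (by linarith)))]
      calc ((m : ℝ) + 1)⁻¹ - (y + ((m : ℝ) + 1))⁻¹ = y / ((m + 1) * (y + (m + 1))) := by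
            field_simp; ring
        _ ≤ b / ((m + 1) * (m + 1)) := by gcongr ?_ / (_ * ?_) <;> linarith [hy.2]
        _ = b * ((1 + (m : ℝ)) ^ 2)⁻¹ := by ring
  exact ((hconst.sub hfixed).add hseries).congr
    (.of_forall fun n y _ ↦ (logGammaSeqDeriv_one_eq n y).symm)

theorem tendstoLocallyUniformlyOn_logGammaSeqDeriv (k : ℕ) :
    TendstoLocallyUniformlyOn (logGammaSeqDeriv (k + 1)) (logGammaDerivSeries (k + 1)) atTop
      (Ioi 0) := by
  rcases k with _ | k
  · exact tendstoLocallyUniformlyOn_logGammaSeqDeriv_one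
  refine tendstoLocallyUniformlyOn_Ioi_of_Icc fun a b ha ↦ ?_
  have hseries := tendstoUniformlyOn_tsum_nat
    ((summable_inv_add_pow a (k := k + 2) (by omega)).mul_left ((k + 1)! : ℝ))
    (f := fun m y ↦ negLogDeriv (k + 1) (y + m)) (s := Icc a b) fun m y hy ↦ by
      have hy₀ : 0 < y := ha.trans_le hy.1
      rw [Real.norm_eq_abs, abs_negLogDeriv, abs_of_pos (by positivity)]
      gcongr
      exact hy.1
  -- `logGammaSeqDeriv` sums over `range (n + 1)`, hence the shift.
  exact fun u hu ↦ (tendsto_add_atTop_nat 1).eventually (hseries u hu)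

theorem eqOn_iterate_deriv_logGamma (k : ℕ) :
    EqOn (deriv^[k] fun y ↦ log (Gamma y)) (logGammaDerivSeries k) (Ioi 0) :=
  eqOn_iterate_deriv_of_tendstoLocallyUniformlyOn (f := logGammaDerivSeries) (l := atTop)
    isOpen_Ioi
    (fun k n _ hy ↦ hasDerivAt_logGammaSeqDeriv k n hy)
    (fun _ hy ↦ BohrMollerup.tendsto_log_gamma hy) tendstoLocallyUniformlyOn_logGammaSeqDeriv k

theorem polygamma_eq_tsum {n : ℕ} (hn : n ≠ 0) {y : ℝ} (hy : 0 < y) :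
    polygamma n y = (-1) ^ (n + 1) * n ! * ∑' m : ℕ, ((y + m) ^ (n + 1))⁻¹ := by
  obtain ⟨k, rfl⟩ := Nat.exists_eq_succ_of_ne_zero hn
  rw [polygamma, iteratedDeriv_eq_iterate, eqOn_iterate_deriv_logGamma (k + 2) hy]
  exact tsum_mul_left

theorem factorial_div_pow_le_neg_one_pow_mul_polygamma (k : ℕ) {y : ℝ} (hy : 0 < y) :
    (k ! : ℝ) / y ^ (k + 1) ≤ (-1) ^ (k + 2) * polygamma (k + 1) y := by
  have hsign : ((-1) ^ (k + 2) * (-1) ^ (k + 2) : ℝ) = 1 := by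
    rw [← mul_pow, neg_one_mul, neg_neg, one_pow]
  rw [polygamma_eq_tsum k.succ_ne_zero hy, ← mul_assoc, ← mul_assoc, hsign, one_mul,
    Nat.factorial_succ, Nat.cast_mul, mul_comm ((k + 1 : ℕ) : ℝ), mul_assoc, div_eq_mul_inv]
  exact mul_le_mul_of_nonneg_left (inv_pow_le_mul_tsum_inv_add_pow hy k.succ_ne_zero)
    (by positivity)

theorem stmt_5 (β : ℝ) (hβ : 0 < β) (x : ℝ) (hx : 0 < x) (k : ℕ) (hk : 2 ≤ k) :
    (Nat.factorial (k - 2) : ℝ) / x ^ (k - 1) - β * (Nat.factorial (k - 1) : ℝ) / x ^ k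
      ≤ (-1 : ℝ) ^ k * polygamma (k - 1) (x + β) := by
  obtain ⟨j, rfl⟩ : ∃ j, k = j + 2 := ⟨k - 2, by omega⟩
  have htangent := inv_pow_sub_le_inv_add_pow hx hβ.le (j + 1)
  calc (j ! : ℝ) / x ^ (j + 1) - β * (j + 1)! / x ^ (j + 2)
      = j ! * ((x ^ (j + 1))⁻¹ - (j + 1 : ℕ) * β * (x ^ (j + 1 + 1))⁻¹) := by
        push_cast [Nat.factorial_succ]
        ring
    _ ≤ j ! * ((x + β) ^ (j + 1))⁻¹ := by gcongr
    _ ≤ (-1) ^ (j + 2) * polygamma (j + 1) (x + β) :=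
      factorial_div_pow_le_neg_one_pow_mul_polygamma j (by positivity)
end

section
/- Let β ≥ 1/2. Then for every x > 0 the inequality ψ(x + β) ≥ ln x holds. -/
/-!
Put `g t = ψ(t + 1/2) - log t`. The recurrence `ψ(t + 1) = ψ(t) + 1/t` and the elementary bound
`1/(t + 1/2) ≤ log (1 + 1/t)` give `g (t + 1) ≤ g t`, while convexity of `log ∘ Γ` bounds `ψ` below by
the secant slope `ψ(t + 1/2) ≥ log (t - 1/2)`, so `liminf g (t + n) ≥ 0`. Hence `g ≥ 0`, and
monotonicity of `ψ` (again convexity) lets `1/2` be raised to any `β ≥ 1/2`.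
-/

open Real

/-- The psi (digamma) function: the derivative of `ln ∘ Γ`. -/
noncomputable def psi : ℝ → ℝ := deriv (fun x : ℝ => Real.log (Real.Gamma x))

open Set Filter Topology

lemma differentiableAt_log_Gamma_s6 {y : ℝ} (hy : 0 < y) :
    DifferentiableAt ℝ (log ∘ Gamma) y :=
  (differentiableAt_Gamma fun m ↦ ne_of_gt (by linarith [m.cast_nonneg (α := ℝ)])).log
    (Gamma_pos_of_pos hy).ne'

lemma log_Gamma_add_one {y : ℝ} (hy : 0 < y) :
    log (Gamma (y + 1)) = log (Gamma y) + log y := by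
  rw [Gamma_add_one hy.ne', log_mul hy.ne' (Gamma_pos_of_pos hy).ne', add_comm]

lemma psi_add_one {y : ℝ} (hy : 0 < y) : psi (y + 1) = psi y + 1 / y := by
  change deriv (log ∘ Gamma) (y + 1) = deriv (log ∘ Gamma) y + 1 / y
  rw [← deriv_comp_add_const, one_div, ← deriv_log,
    ← deriv_add (differentiableAt_log_Gamma_s6 hy) (differentiableAt_log hy.ne')]
  apply EventuallyEq.deriv_eq
  filter_upwards [eventually_gt_nhds hy] using fun t ht ↦ log_Gamma_add_one ht

lemma monotoneOn_psi : MonotoneOn psi (Ioi 0) :=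
  convexOn_log_Gamma.monotoneOn_deriv fun _ hy ↦ differentiableAt_log_Gamma_s6 hy

lemma log_le_psi_add_one {y : ℝ} (hy : 0 < y) : log y ≤ psi (y + 1) := by
  refine le_of_eq ?_ |>.trans <| convexOn_log_Gamma.slope_le_deriv (mem_Ioi.mpr hy)
    (mem_Ioi.mpr (by linarith : 0 < y + 1)) (by linarith) (differentiableAt_log_Gamma_s6 (by linarith))
  rw [slope_def_field, add_sub_cancel_left, div_one, Function.comp_apply, Function.comp_apply,
    log_Gamma_add_one hy, add_sub_cancel_left]

lemma one_div_add_half_le_log_add_one_sub_log {t : ℝ} (ht : 0 < t) :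
    1 / (t + 1 / 2) ≤ log (t + 1) - log t := by
  have h := le_log_one_add_of_nonneg (inv_nonneg.mpr ht.le)
  rw [← log_div (by linarith) ht.ne', show (t + 1) / t = 1 + t⁻¹ by field_simp]
  convert h using 1
  field_simp
  ring

lemma psi_add_half_sub_log_add_one_le {t : ℝ} (ht : 0 < t) :
    psi (t + 1 + 1 / 2) - log (t + 1) ≤ psi (t + 1 / 2) - log t := by
  rw [add_right_comm, psi_add_one (by linarith)]
  linarith [one_div_add_half_le_log_add_one_sub_log ht]

lemma psi_add_half_sub_log_add_nat_le {x : ℝ} (hx : 0 < x) (n : ℕ) :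
    psi (x + n + 1 / 2) - log (x + n) ≤ psi (x + 1 / 2) - log x := by
  induction n with
  | zero => simp
  | succ n ih =>
    push_cast
    rw [← add_assoc]
    exact (psi_add_half_sub_log_add_one_le (by positivity)).trans ih

lemma tendsto_log_sub_half_sub_log : Tendsto (fun t : ℝ ↦ log (t - 1 / 2) - log t) atTop (𝓝 0) := by
  have hratio : Tendsto (fun t : ℝ ↦ 1 - 2⁻¹ * t⁻¹) atTop (𝓝 1) := by
    simpa using (tendsto_inv_atTop_zero.const_mul (2⁻¹ : ℝ)).const_sub (1 : ℝ)
  have hlog := (continuousAt_log one_ne_zero).tendsto.comp hratio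
  rw [log_one] at hlog
  refine hlog.congr' ?_
  filter_upwards [eventually_gt_atTop (1 / 2)] with t ht
  rw [Function.comp_apply, ← log_div (by linarith) (by linarith)]
  congr 1
  field_simp

lemma log_le_psi_add_half {x : ℝ} (hx : 0 < x) : log x ≤ psi (x + 1 / 2) := by
  have hshift : Tendsto (fun n : ℕ ↦ x + n) atTop atTop :=
    tendsto_atTop_add_const_left _ x tendsto_natCast_atTop_atTop
  have hlower : ∀ᶠ n : ℕ in atTop, log (x + n - 1 / 2) - log (x + n) ≤ psi (x + 1 / 2) - log x := by
    filter_upwards [eventually_ge_atTop 1] with n hn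
    have hn : (1 : ℝ) ≤ n := by exact_mod_cast hn
    refine le_trans ?_ (psi_add_half_sub_log_add_nat_le hx n)
    have h := log_le_psi_add_one (y := x + n - 1 / 2) (by linarith)
    rw [show x + n - 1 / 2 + 1 = x + n + 1 / 2 by ring] at h
    linarith
  linarith [le_of_tendsto (tendsto_log_sub_half_sub_log.comp hshift) hlower]

theorem stmt_6 (β : ℝ) (hβ : 1 / 2 ≤ β) (x : ℝ) (hx : 0 < x) :
    Real.log x ≤ psi (x + β) :=
  (log_le_psi_add_half hx).trans <|
    monotoneOn_psi (mem_Ioi.mpr (by linarith)) (mem_Ioi.mpr (by linarith)) (by linarith)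
end

section
/- Let β ≥ 1. Then for every x > 0 and every integer k ≥ 2 the inequality (−1)^k ψ^{(k−1)}(x + β) ≥ (k−2)!/x^{k−1} − (β − 1/2)·(k−1)!/x^k holds. -/
/-!
For `x > 0` one has `ψ'(x) = ∑ₙ (x + n)⁻²`: the difference between `ψ` and the series
`∑ₙ ((n + 1)⁻¹ - (x + n)⁻¹)` is `1`-periodic, by `Γ(x + 1) = x Γ(x)`, and nondecreasing, because
`ψ' ≥ 0` by log-convexity of `Γ` and iterating `ψ'(x) = ψ'(x + 1) + x⁻²` then gives
`ψ'(x) ≥ ∑ₙ (x + n)⁻²`; so it is constant. Differentiating termwise,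
`(-1)ᵏ ψ^{(k-1)}(y) = (k - 1)! ∑ₙ (y + n)⁻ᵏ`.

Comparing each term with the trapezoid rule for the convex function `t⁻ᵏ` bounds this sum below by
`y^{1-k}/(k - 1) + y⁻ᵏ/2`. For `β ≥ 1`, a convex combination of the trapezoid estimate on
`[x, x + β]` and the tangent-line estimate at `x` moves the point from `x + β` back to `x`, at the
cost of the term `(β - 1/2) (k - 1)! / xᵏ`.
-/

open Real Filter Finset Topology
open scoped Nat

local notation "logΓ" => fun x : ℝ => Real.log (Real.Gamma x)

lemma sum_pow_mul_pow_le {u v : ℝ} (hv : 0 ≤ v) (hvu : v ≤ u) (q : ℕ) :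
    ∑ j ∈ range q, u ^ (j + 1) * v ^ (q - j) ≤ q / 2 * (u ^ (q + 1) + v ^ (q + 1)) := by
  have pair : ∀ j ∈ range q,
      u ^ (j + 1) * v ^ (q - j) + u ^ (q - j) * v ^ (j + 1) ≤ u ^ (q + 1) + v ^ (q + 1) := by
    intro j hj
    have hjq : j < q := mem_range.mp hj
    have hprod : 0 ≤ (u ^ (j + 1) - v ^ (j + 1)) * (u ^ (q - j) - v ^ (q - j)) :=
      mul_nonneg (sub_nonneg.mpr (pow_le_pow_left₀ hv hvu _))
        (sub_nonneg.mpr (pow_le_pow_left₀ hv hvu _))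
    have hexp : j + 1 + (q - j) = q + 1 := by omega
    have hu : u ^ (j + 1) * u ^ (q - j) = u ^ (q + 1) := by rw [← pow_add, hexp]
    have hv' : v ^ (j + 1) * v ^ (q - j) = v ^ (q + 1) := by rw [← pow_add, hexp]
    nlinarith
  -- pair the `j`-th term with the `(q - 1 - j)`-th one
  have hreflect : ∑ j ∈ range q, u ^ (j + 1) * v ^ (q - j)
      = ∑ j ∈ range q, u ^ (q - j) * v ^ (j + 1) := by
    rw [← sum_range_reflect]
    refine sum_congr rfl fun j hj => ?_
    have hjq : j < q := mem_range.mp hj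
    rw [show q - 1 - j + 1 = q - j by omega, show q - (q - 1 - j) = j + 1 by omega]
  have hsum := sum_le_sum pair
  rw [sum_add_distrib, ← hreflect, sum_const, card_range, nsmul_eq_mul] at hsum
  linarith

lemma inv_pow_sub_inv_pow_eq {a b : ℝ} (ha : a ≠ 0) (hb : b ≠ 0) (q : ℕ) :
    (a ^ q)⁻¹ - (b ^ q)⁻¹ = (b - a) * ∑ j ∈ range q, a⁻¹ ^ (j + 1) * b⁻¹ ^ (q - j) := by
  have hgeom := geom_sum₂_mul a⁻¹ b⁻¹ q
  rw [← inv_pow, ← inv_pow, ← hgeom, mul_sum, sum_mul]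
  refine sum_congr rfl fun j hj => ?_
  have hinv : a⁻¹ - b⁻¹ = (b - a) * (a⁻¹ * b⁻¹) := by field_simp
  rw [show q - j = q - 1 - j + 1 by have := mem_range.mp hj; omega, hinv]
  ring

lemma inv_pow_sub_inv_pow_le_trapezoid {a b : ℝ} (ha : 0 < a) (hab : a ≤ b) (q : ℕ) :
    (a ^ q)⁻¹ - (b ^ q)⁻¹ ≤ (b - a) * (q / 2 * ((a ^ (q + 1))⁻¹ + (b ^ (q + 1))⁻¹)) := by
  have hb : 0 < b := ha.trans_le hab
  rw [inv_pow_sub_inv_pow_eq ha.ne' hb.ne', ← inv_pow, ← inv_pow]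
  exact mul_le_mul_of_nonneg_left
    (sum_pow_mul_pow_le (by positivity) (inv_anti₀ ha hab) q) (sub_nonneg.mpr hab)

lemma inv_pow_sub_inv_pow_le {a b : ℝ} (ha : 0 < a) (hab : a ≤ b) (q : ℕ) :
    (a ^ q)⁻¹ - (b ^ q)⁻¹ ≤ (b - a) * (q * (a ^ (q + 1))⁻¹) := by
  have hb : 0 < b := ha.trans_le hab
  rw [inv_pow_sub_inv_pow_eq ha.ne' hb.ne', ← inv_pow]
  refine mul_le_mul_of_nonneg_left ?_ (sub_nonneg.mpr hab)
  calc ∑ j ∈ range q, a⁻¹ ^ (j + 1) * b⁻¹ ^ (q - j)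
      ≤ ∑ j ∈ range q, a⁻¹ ^ (j + 1) * a⁻¹ ^ (q - j) := by
        gcongr
    _ = ∑ j ∈ range q, a⁻¹ ^ (q + 1) := sum_congr rfl fun j hj => by
        rw [← pow_add, show j + 1 + (q - j) = q + 1 by have := mem_range.mp hj; omega]
    _ = q * a⁻¹ ^ (q + 1) := by rw [sum_const, card_range, nsmul_eq_mul]

/-- The average of the two bounds above, weighted by `1 / (b - a)` and `1 - 1 / (b - a)`. -/
lemma inv_pow_sub_inv_pow_le_of_one_le {a b : ℝ} (ha : 0 < a) (hab : 1 ≤ b - a) (q : ℕ) :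
    (a ^ q)⁻¹ - (b ^ q)⁻¹
      ≤ q * (b - a - 1 / 2) * (a ^ (q + 1))⁻¹ + q / 2 * (b ^ (q + 1))⁻¹ := by
  have htrap := inv_pow_sub_inv_pow_le_trapezoid ha (b := b) (by linarith) q
  have hmean := inv_pow_sub_inv_pow_le ha (b := b) (by linarith) q
  have hc : 0 < b - a := by linarith
  refine le_of_mul_le_mul_left ?_ hc
  nlinarith [mul_le_mul_of_nonneg_left hmean (sub_nonneg.mpr hab)]

lemma inv_pow_sub_inv_pow_add_one_le {a : ℝ} (ha : 0 < a) {q : ℕ} (hq : 0 < q) :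
    (q : ℝ)⁻¹ * ((a ^ q)⁻¹ - ((a + 1) ^ q)⁻¹) + 1 / 2 * ((a ^ (q + 1))⁻¹ - ((a + 1) ^ (q + 1))⁻¹)
      ≤ (a ^ (q + 1))⁻¹ := by
  have htrap := inv_pow_sub_inv_pow_le_trapezoid ha (le_add_of_nonneg_right zero_le_one) q
  rw [add_sub_cancel_left, one_mul] at htrap
  have hq' : (0 : ℝ) < q := by exact_mod_cast hq
  have : (q : ℝ)⁻¹ * ((a ^ q)⁻¹ - ((a + 1) ^ q)⁻¹)
      ≤ 1 / 2 * ((a ^ (q + 1))⁻¹ + ((a + 1) ^ (q + 1))⁻¹) := by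
    rw [inv_mul_le_iff₀ hq']; linarith
  linarith

noncomputable def hurwitzSum (p : ℕ) (x : ℝ) : ℝ := ∑' n : ℕ, ((x + n) ^ p)⁻¹

lemma summable_inv_add_pow_s9 {x : ℝ} (hx : 0 < x) {p : ℕ} (hp : 2 ≤ p) :
    Summable fun n : ℕ => ((x + n) ^ p)⁻¹ := by
  refine ((summable_one_div_nat_add_rpow x p).2 (by exact_mod_cast hp)).congr fun n => ?_
  rw [abs_of_pos (by positivity), Real.rpow_natCast, add_comm, one_div]

lemma tendsto_inv_add_pow_atTop (x : ℝ) {p : ℕ} (hp : p ≠ 0) :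
    Tendsto (fun N : ℕ => ((x + N) ^ p)⁻¹) atTop (𝓝 0) :=
  ((tendsto_pow_atTop hp).comp
    (tendsto_atTop_add_const_left _ x tendsto_natCast_atTop_atTop)).inv_tendsto_atTop

/-- The trapezoid bound `g t - g (t + 1) ≤ (t ^ (q + 1))⁻¹`, summed over `t = x + n`, telescopes. -/
lemma le_hurwitzSum {x : ℝ} (hx : 0 < x) {q : ℕ} (hq : 0 < q) :
    (q : ℝ)⁻¹ * (x ^ q)⁻¹ + 1 / 2 * (x ^ (q + 1))⁻¹ ≤ hurwitzSum (q + 1) x := by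
  set g : ℝ → ℝ := fun t => (q : ℝ)⁻¹ * (t ^ q)⁻¹ + 1 / 2 * (t ^ (q + 1))⁻¹
  have hg : Tendsto (fun N : ℕ => g (x + N)) atTop (𝓝 0) := by
    simpa using ((tendsto_inv_add_pow_atTop x hq.ne').const_mul _).add
      ((tendsto_inv_add_pow_atTop x (q.succ_ne_zero)).const_mul _)
  have hpartial : ∀ N : ℕ, g x - g (x + N) ≤ ∑ n ∈ range N, ((x + n) ^ (q + 1))⁻¹ := by
    intro N
    have htele := sum_range_sub' (fun n : ℕ => g (x + n)) N
    rw [Nat.cast_zero, add_zero] at htele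
    rw [← htele]
    gcongr with n
    push_cast
    have := inv_pow_sub_inv_pow_add_one_le (by positivity : 0 < x + n) hq
    simp only [g, ← add_assoc]
    linarith
  have hlim := (tendsto_const_nhds (x := g x)).sub hg
  rw [sub_zero] at hlim
  exact le_of_tendsto_of_tendsto' hlim
    (summable_inv_add_pow_s9 hx (by omega)).hasSum.tendsto_sum_nat hpartial

lemma hasDerivAt_inv_add_pow (n p : ℕ) {y : ℝ} (hy : y + n ≠ 0) :
    HasDerivAt (fun z : ℝ => ((z + n) ^ p)⁻¹) (-p * ((y + n) ^ (p + 1))⁻¹) y := by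
  have h := ((hasDerivAt_id' y).add_const (n : ℝ)).fun_pow p |>.fun_inv (pow_ne_zero p hy)
  refine h.congr_deriv ?_
  rcases p with _ | p
  · simp
  · rw [Nat.add_sub_cancel]
    field_simp
    ring

lemma norm_inv_add_pow_le {a y : ℝ} (ha : 0 < a) (hay : a < y) (n p : ℕ) :
    ‖((y + n) ^ p)⁻¹‖ ≤ ((a + n) ^ p)⁻¹ := by
  have hy : 0 < y := ha.trans hay
  rw [Real.norm_of_nonneg (by positivity)]
  gcongr

lemma hasDerivAt_hurwitzSum {p : ℕ} (hp : 2 ≤ p) {x : ℝ} (hx : 0 < x) :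
    HasDerivAt (hurwitzSum p) (-p * hurwitzSum (p + 1) x) x := by
  have ha : 0 < x / 2 := by positivity
  have hderiv := hasDerivAt_tsum_of_isPreconnected (t := Set.Ioi (x / 2))
    ((summable_inv_add_pow_s9 ha (by omega : 2 ≤ p + 1)).mul_left (p : ℝ))
    isOpen_Ioi isPreconnected_Ioi
    (fun n y hy => hasDerivAt_inv_add_pow n p (by have := ha.trans hy; positivity))
    (fun n y hy => by
      rw [norm_mul, norm_neg, Real.norm_natCast]
      exact mul_le_mul_of_nonneg_left (norm_inv_add_pow_le ha hy n _) p.cast_nonneg)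
    (show x / 2 < x by linarith) (summable_inv_add_pow_s9 hx hp) (show x / 2 < x by linarith)
  rwa [tsum_mul_left] at hderiv

lemma hasSum_sub_succ {G : Type*} [AddCommGroup G] [TopologicalSpace G] [IsTopologicalAddGroup G]
    [T2Space G] {f : ℕ → G} (hf : Tendsto f atTop (𝓝 0))
    (hs : Summable fun n => f n - f (n + 1)) : HasSum (fun n => f n - f (n + 1)) (f 0) := by
  convert hs.hasSum
  refine tendsto_nhds_unique ?_ hs.hasSum.tendsto_sum_nat
  simpa only [sum_range_sub', sub_zero] using tendsto_const_nhds.sub hf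

/-- The classical series for `ψ x + γ`. -/
noncomputable def digammaSeries (x : ℝ) : ℝ := ∑' n : ℕ, (((n : ℝ) + 1)⁻¹ - (x + n)⁻¹)

lemma hasDerivAt_digammaSeries_term (n : ℕ) {y : ℝ} (hy : 0 < y) :
    HasDerivAt (fun z : ℝ => ((n : ℝ) + 1)⁻¹ - (z + n)⁻¹) ((y + n) ^ 2)⁻¹ y := by
  simpa using (hasDerivAt_inv_add_pow n 1 (by positivity : y + n ≠ 0)).const_sub _

lemma summable_digammaSeries {x : ℝ} (hx : 0 < x) :
    Summable fun n : ℕ => ((n : ℝ) + 1)⁻¹ - (x + n)⁻¹ := by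
  have ha : 0 < min x 1 / 2 := by positivity
  -- summability spreads from `1`, where every term vanishes, along the dominated derivatives
  refine summable_of_summable_hasDerivAt_of_isPreconnected (t := Set.Ioi (min x 1 / 2))
    (summable_inv_add_pow_s9 ha le_rfl) isOpen_Ioi isPreconnected_Ioi
    (fun n y hy => hasDerivAt_digammaSeries_term n (ha.trans hy))
    (fun n y hy => norm_inv_add_pow_le ha hy n 2) (y₀ := 1) ?_ ?_ ?_
  · show min x 1 / 2 < 1
    linarith [min_le_right x 1]
  · simp [add_comm]
  · show min x 1 / 2 < x
    linarith [min_le_left x 1]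

lemma hasDerivAt_digammaSeries {x : ℝ} (hx : 0 < x) :
    HasDerivAt digammaSeries (hurwitzSum 2 x) x := by
  have ha : 0 < x / 2 := by positivity
  exact hasDerivAt_tsum_of_isPreconnected (t := Set.Ioi (x / 2))
    (summable_inv_add_pow_s9 ha le_rfl) isOpen_Ioi isPreconnected_Ioi
    (fun n y hy => hasDerivAt_digammaSeries_term n (ha.trans hy))
    (fun n y hy => norm_inv_add_pow_le ha hy n 2) (show x / 2 < x by linarith)
    (summable_digammaSeries hx) (show x / 2 < x by linarith)

lemma digammaSeries_add_one {x : ℝ} (hx : 0 < x) :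
    digammaSeries (x + 1) = digammaSeries x + x⁻¹ := by
  have htele : HasSum (fun n : ℕ => (x + n)⁻¹ - (x + ↑(n + 1))⁻¹) x⁻¹ := by
    simpa using hasSum_sub_succ (f := fun n : ℕ => (x + n)⁻¹)
      (by simpa using tendsto_inv_add_pow_atTop x one_ne_zero)
      (((summable_digammaSeries (by positivity : 0 < x + 1)).sub
        (summable_digammaSeries hx)).congr fun n => by push_cast; ring)
  rw [digammaSeries, digammaSeries, ← ((summable_digammaSeries hx).hasSum.add htele).tsum_eq]
  congr 1 with n
  push_cast
  ring

lemma contDiffAt_Gamma {x : ℝ} (hx : 0 < x) {n : WithTop ℕ∞} : ContDiffAt ℝ n Gamma x := by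
  have hopen : IsOpen {s : ℂ | 0 < s.re} := isOpen_lt continuous_const Complex.continuous_re
  have hdiff : DifferentiableOn ℂ Complex.Gamma {s : ℂ | 0 < s.re} := fun s hs =>
    (Complex.differentiableAt_Gamma s fun m hm => by
      have : (0 : ℝ) ≤ m := m.cast_nonneg
      simp [hm] at hs; linarith).differentiableWithinAt
  have hC : ContDiffAt ℂ n Complex.Gamma x :=
    (hdiff.contDiffOn hopen).contDiffAt (hopen.mem_nhds (by simpa using hx))
  have hR : ContDiffAt ℝ n (fun y : ℝ => (Complex.Gamma y).re) x :=
    Complex.reCLM.contDiff.contDiffAt.comp x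
      ((hC.restrict_scalars ℝ).comp x Complex.ofRealCLM.contDiff.contDiffAt)
  simpa only [Complex.Gamma_ofReal, Complex.ofReal_re] using hR

lemma contDiffAt_logGamma {x : ℝ} (hx : 0 < x) {n : WithTop ℕ∞} : ContDiffAt ℝ n logΓ x :=
  (contDiffAt_Gamma hx).log (Gamma_pos_of_pos hx).ne'

lemma differentiableAt_logGamma {x : ℝ} (hx : 0 < x) : DifferentiableAt ℝ logΓ x :=
  (contDiffAt_logGamma hx (n := 1)).differentiableAt one_ne_zero

lemma differentiableAt_deriv_logGamma {x : ℝ} (hx : 0 < x) : DifferentiableAt ℝ (deriv logΓ) x :=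
  ((contDiffAt_logGamma hx (n := 2)).derivWithin (m := 1) (by norm_num)).differentiableAt
    one_ne_zero

lemma logGamma_add_one {x : ℝ} (hx : 0 < x) : logΓ (x + 1) = logΓ x + log x := by
  dsimp only
  rw [Gamma_add_one hx.ne', log_mul hx.ne' (Gamma_pos_of_pos hx).ne', add_comm]

lemma deriv_logGamma_add_one {x : ℝ} (hx : 0 < x) :
    deriv logΓ (x + 1) = deriv logΓ x + x⁻¹ := by
  have hshift : (fun y => logΓ (y + 1)) =ᶠ[𝓝 x] fun y => logΓ y + log y := by
    filter_upwards [eventually_gt_nhds hx] with y hy using logGamma_add_one hy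
  rw [← deriv_comp_add_const, hshift.deriv_eq,
    deriv_fun_add (differentiableAt_logGamma hx) (differentiableAt_log hx.ne'), deriv_log]

lemma deriv_deriv_logGamma_add_one {x : ℝ} (hx : 0 < x) :
    deriv (deriv logΓ) (x + 1) = deriv (deriv logΓ) x - (x ^ 2)⁻¹ := by
  have hshift : (fun y => deriv logΓ (y + 1)) =ᶠ[𝓝 x] fun y => deriv logΓ y + y⁻¹ := by
    filter_upwards [eventually_gt_nhds hx] with y hy using deriv_logGamma_add_one hy
  rw [← deriv_comp_add_const, hshift.deriv_eq,
    deriv_fun_add (differentiableAt_deriv_logGamma hx) (differentiableAt_inv hx.ne'), deriv_inv,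
    sub_eq_add_neg]

lemma deriv_deriv_logGamma_nonneg {x : ℝ} (hx : 0 < x) : 0 ≤ deriv (deriv logΓ) x := by
  have hmono : MonotoneOn (deriv logΓ) (Set.Ioi 0) :=
    convexOn_log_Gamma.monotoneOn_deriv fun y hy => differentiableAt_logGamma hy
  simpa only [derivWithin_of_isOpen isOpen_Ioi (Set.mem_Ioi.2 hx)]
    using hmono.derivWithin_nonneg (x := x)

lemma deriv_deriv_logGamma_eq_add_sum {x : ℝ} (hx : 0 < x) (N : ℕ) :
    deriv (deriv logΓ) x = deriv (deriv logΓ) (x + N) + ∑ n ∈ range N, ((x + n) ^ 2)⁻¹ := by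
  induction N with
  | zero => simp
  | succ N ih =>
    rw [ih, sum_range_succ, Nat.cast_succ, ← add_assoc x,
      deriv_deriv_logGamma_add_one (by positivity : 0 < x + N)]
    ring

lemma hurwitzSum_two_le_deriv_deriv_logGamma {x : ℝ} (hx : 0 < x) :
    hurwitzSum 2 x ≤ deriv (deriv logΓ) x :=
  Real.tsum_le_of_sum_range_le (fun n => by positivity) fun N => by
    linarith [deriv_deriv_logGamma_eq_add_sum hx N,
      deriv_deriv_logGamma_nonneg (by positivity : 0 < x + N)]

lemma MonotoneOn.eventuallyEq_of_add_one {f : ℝ → ℝ} {a x : ℝ} (hf : MonotoneOn f (Set.Ioi a))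
    (hper : ∀ y, a < y → f (y + 1) = f y) (hx : a < x) : f =ᶠ[𝓝 x] fun _ => f x := by
  filter_upwards [Ioo_mem_nhds (max_lt hx (sub_one_lt x)) (lt_add_one x)] with y hy
  obtain ⟨hay, hxy⟩ := max_lt_iff.mp hy.1
  rcases le_total x y with h | h
  · exact le_antisymm (hper x hx ▸ hf hay (by simp; linarith) hy.2.le) (hf hx hay h)
  · exact le_antisymm (hf hay hx h) (hper y hay ▸ hf hx (by simp; linarith) (by linarith))

/-- `ψ - digammaSeries` is nondecreasing (by the bound above) and `1`-periodic, hence constant. -/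
lemma deriv_deriv_logGamma_eq_hurwitzSum {x : ℝ} (hx : 0 < x) :
    deriv (deriv logΓ) x = hurwitzSum 2 x := by
  set F : ℝ → ℝ := fun y => deriv logΓ y - digammaSeries y
  have hF : ∀ y, 0 < y → HasDerivAt F (deriv (deriv logΓ) y - hurwitzSum 2 y) y := fun y hy =>
    (differentiableAt_deriv_logGamma hy).hasDerivAt.sub (hasDerivAt_digammaSeries hy)
  have hmono : MonotoneOn F (Set.Ioi 0) := by
    refine monotoneOn_of_deriv_nonneg (convex_Ioi 0)
      (fun y hy => (hF y hy).continuousAt.continuousWithinAt)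
      (fun y hy => (hF y (interior_subset hy)).differentiableAt.differentiableWithinAt)
      fun y hy => ?_
    rw [interior_Ioi] at hy
    rw [(hF y hy).deriv, sub_nonneg]
    exact hurwitzSum_two_le_deriv_deriv_logGamma hy
  have hper : ∀ y, 0 < y → F (y + 1) = F y := fun y hy => by
    simp only [F, deriv_logGamma_add_one hy, digammaSeries_add_one hy]
    ring
  have hconst := (hmono.eventuallyEq_of_add_one hper hx).deriv_eq
  rw [(hF x hx).deriv, deriv_const] at hconst
  linarith

lemma iteratedDeriv_logGamma {q : ℕ} (hq : 1 ≤ q) {x : ℝ} (hx : 0 < x) :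
    iteratedDeriv (q + 1) logΓ x = (-1) ^ (q + 1) * q ! * hurwitzSum (q + 1) x := by
  induction q, hq using Nat.le_induction generalizing x with
  | base =>
    rw [iteratedDeriv_succ, iteratedDeriv_one, deriv_deriv_logGamma_eq_hurwitzSum hx]
    norm_num
  | succ q hq ih =>
    have hloc : iteratedDeriv (q + 1) logΓ =ᶠ[𝓝 x]
        fun y => (-1) ^ (q + 1) * q ! * hurwitzSum (q + 1) y := by
      filter_upwards [eventually_gt_nhds hx] with y hy using ih hy
    rw [iteratedDeriv_succ, hloc.deriv_eq,
      ((hasDerivAt_hurwitzSum (by omega) hx).const_mul _).deriv, Nat.factorial_succ]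
    push_cast
    ring

lemma factorial_div_pow_le_polygamma {y : ℝ} (hy : 0 < y) (m : ℕ) :
    m ! / y ^ (m + 1) + (m + 1)! / 2 / y ^ (m + 2) ≤ (-1) ^ (m + 2) * polygamma (m + 1) y := by
  have hS := le_hurwitzSum hy m.succ_pos
  rw [polygamma, iteratedDeriv_logGamma (by omega) hy, ← mul_assoc, ← mul_assoc, ← pow_add,
    Even.neg_one_pow ⟨m + 2, rfl⟩, one_mul]
  have hm : (0 : ℝ) < m + 1 := by positivity
  calc m ! / y ^ (m + 1) + (m + 1)! / 2 / y ^ (m + 2)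
      = (m + 1)! * (((m + 1 : ℕ) : ℝ)⁻¹ * (y ^ (m + 1))⁻¹ + 1 / 2 * (y ^ (m + 1 + 1))⁻¹) := by
        rw [Nat.factorial_succ]
        push_cast
        field_simp
    _ ≤ (m + 1)! * hurwitzSum (m + 2) y := by gcongr

theorem stmt_9 (β : ℝ) (hβ : 1 ≤ β) (x : ℝ) (hx : 0 < x) (k : ℕ) (hk : 2 ≤ k) :
    (Nat.factorial (k - 2) : ℝ) / x ^ (k - 1)
        - (β - 1 / 2) * (Nat.factorial (k - 1) : ℝ) / x ^ k
      ≤ (-1 : ℝ) ^ k * polygamma (k - 1) (x + β) := by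
  obtain ⟨m, rfl⟩ : ∃ m, k = m + 2 := ⟨k - 2, by omega⟩
  simp only [Nat.add_sub_cancel, show m + 2 - 1 = m + 1 by omega]
  have hlower := factorial_div_pow_le_polygamma (by linarith : 0 < x + β) m
  have hgap := mul_le_mul_of_nonneg_left
    (inv_pow_sub_inv_pow_le_of_one_le hx (b := x + β) (by linarith) (m + 1))
    (by positivity : (0 : ℝ) ≤ m !)
  rw [add_sub_cancel_left] at hgap
  simp only [div_eq_mul_inv, Nat.factorial_succ] at hlower ⊢
  push_cast at hgap hlower ⊢
  linarith
end

section
/- Let n ≥ 1 be an integer, x_1, …, x_n > 0, and p_1, …, p_n ≥ 0 with p_1 + ⋯ + p_n = 1. If either (β > 0 and α ≤ 0) or (β ≥ 1 and α ≤ 1/2), then (∏_{k=1}^n Γ(x_k + β)^{p_k}) / Γ(∑_{k=1}^n p_k x_k + β) ≥ (∏_{k=1}^n x_k^{p_k (x_k + β − α)}) / (∑_{k=1}^n p_k x_k)^{∑_{k=1}^n p_k x_k + β − α}. -/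
/-!
The function `f y = log Γ(y + β) - (y + β - α) log y` is convex on `(0, ∞)`, and the inequality is
Jensen's inequality `f (∑ pₖ xₖ) ≤ ∑ pₖ f xₖ`, exponentiated.

Convexity of `f` is obtained as a pointwise limit, since Gauss' product
`log Γ(s) = lim (s log m + log m! - ∑_{j ≤ m} log (s + j))` can be differentiated termwise.
With `φ t = 1/t + 1/(2t²)`, telescoping `φ s - φ (s + 1) ≤ 1/s²` bounds the partial trigamma sum
`∑_{j ≤ m} (t + j)⁻²` below by `φ t - φ (t + m + 1)`, and the conditions on `α, β` give
`φ (y + β) ≥ 1/y - (β - α)/y²`, which is `f'' ≥ 0` up to the vanishing tail `φ (y + β + m + 1)`.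
-/

open Real Finset

open Filter Topology in
theorem ConvexOn.of_tendsto {ι E : Type*} [AddCommMonoid E] [Module ℝ E] {l : Filter ι}
    [l.NeBot] {s : Set E} {F : ι → E → ℝ} {f : E → ℝ} (hF : ∀ᶠ i in l, ConvexOn ℝ s (F i))
    (hlim : ∀ x ∈ s, Tendsto (fun i => F i x) l (𝓝 (f x))) : ConvexOn ℝ s f := by
  obtain ⟨i₀, hi₀⟩ := hF.exists
  refine ⟨hi₀.1, fun x hx y hy a b ha hb hab => ?_⟩
  refine le_of_tendsto_of_tendsto (hlim _ (hi₀.1 hx hy ha hb hab))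
    (((hlim x hx).const_smul a).add ((hlim y hy).const_smul b)) ?_
  filter_upwards [hF] with i hi using hi.2 hx hy ha hb hab

theorem convexOn_of_hasDerivAt2_nonneg {D : Set ℝ} (hD : Convex ℝ D) (hDo : IsOpen D)
    {f f' f'' : ℝ → ℝ} (hf : ∀ x ∈ D, HasDerivAt f (f' x) x)
    (hf' : ∀ x ∈ D, HasDerivAt f' (f'' x) x) (hf'' : ∀ x ∈ D, 0 ≤ f'' x) :
    ConvexOn ℝ D f := by
  refine convexOn_of_hasDerivWithinAt2_nonneg (f' := f') (f'' := f'') hD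
    (fun x hx => (hf x hx).continuousAt.continuousWithinAt) ?_ ?_ ?_ <;>
    rw [hDo.interior_eq]
  exacts [fun x hx => (hf x hx).hasDerivWithinAt, fun x hx => (hf' x hx).hasDerivWithinAt, hf'']

namespace Real.BohrMollerup

theorem hasDerivAt_logGammaSeq {x : ℝ} (hx : 0 < x) (n : ℕ) :
    HasDerivAt (logGammaSeq · n) (log n - ∑ j ∈ range (n + 1), (x + j)⁻¹) x := by
  have hsum : HasDerivAt (fun y => ∑ j ∈ range (n + 1), log (y + j))
      (∑ j ∈ range (n + 1), (x + j)⁻¹) x :=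
    HasDerivAt.fun_sum fun j _ => by
      simpa using ((hasDerivAt_id x).add_const (j : ℝ)).log (by positivity)
  unfold logGammaSeq
  simpa using (((hasDerivAt_id x).mul_const (log n)).add_const _).fun_sub hsum

theorem hasDerivAt_log_sub_sum_inv {x : ℝ} (hx : 0 < x) (n : ℕ) :
    HasDerivAt (fun y : ℝ => log n - ∑ j ∈ range (n + 1), (y + j)⁻¹)
      (∑ j ∈ range (n + 1), ((x + j) ^ 2)⁻¹) x := by
  have hsum : HasDerivAt (fun y : ℝ => ∑ j ∈ range (n + 1), (y + j)⁻¹)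
      (∑ j ∈ range (n + 1), -((x + j) ^ 2)⁻¹) x :=
    HasDerivAt.fun_sum fun j _ => by
      simpa [neg_div] using ((hasDerivAt_id x).add_const (j : ℝ)).fun_inv (by positivity)
  simpa using hsum.const_sub (log n)

end Real.BohrMollerup

def AdmissibleParams (α β : ℝ) : Prop :=
  (0 < β ∧ α ≤ 0) ∨ (1 ≤ β ∧ α ≤ 1 / 2)

theorem AdmissibleParams.pos {α β : ℝ} (h : AdmissibleParams α β) : 0 < β := by
  rcases h with ⟨hβ, _⟩ | ⟨hβ, _⟩ <;> linarith

theorem inv_add_inv_two_mul_sq_le {s : ℝ} (hs : 0 < s) :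
    s⁻¹ + (2 * s ^ 2)⁻¹ ≤ (s ^ 2)⁻¹ + ((s + 1)⁻¹ + (2 * (s + 1) ^ 2)⁻¹) := by
  rw [← sub_nonneg]
  have key : (s ^ 2)⁻¹ + ((s + 1)⁻¹ + (2 * (s + 1) ^ 2)⁻¹) - (s⁻¹ + (2 * s ^ 2)⁻¹)
      = (2 * s ^ 2 * (s + 1) ^ 2)⁻¹ := by
    field_simp
    ring
  rw [key]
  positivity

theorem inv_add_inv_two_mul_sq_le_sum {t : ℝ} (ht : 0 < t) (m : ℕ) :
    t⁻¹ + (2 * t ^ 2)⁻¹ ≤ ∑ j ∈ range m, ((t + j) ^ 2)⁻¹ + ((t + m)⁻¹ + (2 * (t + m) ^ 2)⁻¹) := by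
  induction m with
  | zero => simp
  | succ m ih =>
    have step := inv_add_inv_two_mul_sq_le (s := t + m) (by positivity)
    rw [add_assoc t (m : ℝ) 1] at step
    rw [sum_range_succ, Nat.cast_succ]
    linarith

theorem inv_sub_div_sq_le_inv_add_inv_two_mul_sq {α β x : ℝ} (hx : 0 < x)
    (hαβ : AdmissibleParams α β) :
    x⁻¹ - (β - α) / x ^ 2 ≤ (x + β)⁻¹ + (2 * (x + β) ^ 2)⁻¹ := by
  rcases hαβ with ⟨hβ, hα⟩ | ⟨hβ, hα⟩
  · calc x⁻¹ - (β - α) / x ^ 2 ≤ x⁻¹ - β / x ^ 2 := by gcongr; linarith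
      _ = (x + β)⁻¹ - β ^ 2 / (x ^ 2 * (x + β)) := by field_simp; ring
      _ ≤ (x + β)⁻¹ + (2 * (x + β) ^ 2)⁻¹ :=
        (sub_le_self _ (by positivity)).trans (le_add_of_nonneg_right (by positivity))
  · have hpos : 0 ≤ (2 * β - 1) * (x + β) - x := by nlinarith
    calc x⁻¹ - (β - α) / x ^ 2 ≤ x⁻¹ - (β - 1 / 2) / x ^ 2 := by gcongr
      _ = (x + β)⁻¹ + (2 * (x + β) ^ 2)⁻¹
          - β * ((2 * β - 1) * (x + β) - x) / (2 * x ^ 2 * (x + β) ^ 2) := by field_simp; ring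
      _ ≤ (x + β)⁻¹ + (2 * (x + β) ^ 2)⁻¹ := sub_le_self _ (by positivity)

theorem inv_sub_div_sq_le_sum_inv_sq {α β y : ℝ} (hy : 0 < y)
    (hαβ : AdmissibleParams α β) (m : ℕ) :
    y⁻¹ - (β - α) / y ^ 2 ≤ ∑ j ∈ range (m + 1), ((y + β + j) ^ 2)⁻¹ + 2 / (m + 1) := by
  have hβ := hαβ.pos
  set u : ℝ := y + β + (m + 1 : ℕ)
  have hu : (m + 1 : ℝ) ≤ u := by simp [u]; linarith
  have tail : u⁻¹ + (2 * u ^ 2)⁻¹ ≤ 2 / (m + 1) := by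
    have h1 : u⁻¹ ≤ (m + 1 : ℝ)⁻¹ := inv_anti₀ (by positivity) hu
    have h2 : (2 * u ^ 2)⁻¹ ≤ u⁻¹ := inv_anti₀ (by positivity) (by nlinarith)
    rw [div_eq_mul_inv]
    linarith
  linarith [inv_sub_div_sq_le_inv_add_inv_two_mul_sq hy hαβ,
    inv_add_inv_two_mul_sq_le_sum (t := y + β) (by positivity) (m + 1)]

open Real.BohrMollerup in
theorem convexOn_logGammaSeq_add_sq_div_sub_mul_log {α β : ℝ}
    (hαβ : AdmissibleParams α β) (m : ℕ) :
    ConvexOn ℝ (Set.Ioi 0)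
      (fun y => logGammaSeq (y + β) m + y ^ 2 / (m + 1) - (y + β - α) * log y) := by
  have hβ := hαβ.pos
  -- `y ^ 2 / (m + 1)` makes up for the tail `∑_{j > m} (y + β + j)⁻²` of the trigamma series
  -- missing from the second derivative of `logGammaSeq`, and vanishes as `m → ∞`.
  refine convexOn_of_hasDerivAt2_nonneg (convex_Ioi 0) isOpen_Ioi
    (f' := fun y => log m - ∑ j ∈ range (m + 1), (y + β + j)⁻¹ + 2 * y / (m + 1)
      - (log y + 1 + (β - α) / y))
    (f'' := fun y => ∑ j ∈ range (m + 1), ((y + β + j) ^ 2)⁻¹ + 2 / (m + 1)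
      - (y⁻¹ - (β - α) / y ^ 2)) (fun y hy => ?_) (fun y hy => ?_)
    (fun y hy => sub_nonneg.mpr (inv_sub_div_sq_le_sum_inv_sq hy hαβ m))
  all_goals
    have hy : 0 < y := hy
    have hyβ : 0 < y + β := by linarith
  · have hG := (hasDerivAt_logGammaSeq hyβ m).comp_add_const y β
    have hsq := (hasDerivAt_pow 2 y).div_const ((m : ℝ) + 1)
    have hlog := (((hasDerivAt_id' y).add_const β).sub_const α).fun_mul (hasDerivAt_log hy.ne')
    refine ((hG.fun_add hsq).fun_sub hlog).congr_deriv ?_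
    field_simp
    ring
  · have hG := (hasDerivAt_log_sub_sum_inv hyβ m).comp_add_const y β
    have hlin := ((hasDerivAt_id' y).const_mul 2).div_const ((m : ℝ) + 1)
    have hlog := ((hasDerivAt_log hy.ne').add_const 1).fun_add
      ((hasDerivAt_inv hy.ne').const_mul (β - α))
    refine ((hG.fun_add hlin).fun_sub hlog).congr_deriv ?_
    field_simp
    ring

open Filter Topology Real.BohrMollerup in
theorem convexOn_log_Gamma_add_sub_mul_log {α β : ℝ}
    (hαβ : AdmissibleParams α β) :
    ConvexOn ℝ (Set.Ioi 0) (fun y => log (Gamma (y + β)) - (y + β - α) * log y) := by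
  have hβ := hαβ.pos
  refine ConvexOn.of_tendsto (l := atTop)
    (Eventually.of_forall (convexOn_logGammaSeq_add_sq_div_sub_mul_log hαβ)) fun y hy => ?_
  have hGamma := tendsto_log_gamma (x := y + β) (by linarith [hy.out])
  have hsq : Tendsto (fun m : ℕ => y ^ 2 / ((m : ℝ) + 1)) atTop (𝓝 0) := by
    simpa [div_eq_mul_inv] using tendsto_one_div_add_atTop_nhds_zero_nat.const_mul (y ^ 2)
  simpa using (hGamma.add hsq).sub_const ((y + β - α) * log y)

theorem log_prod_rpow {ι : Type*} {s : Finset ι} {f g : ι → ℝ} (hf : ∀ i ∈ s, 0 < f i) :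
    log (∏ i ∈ s, f i ^ g i) = ∑ i ∈ s, g i * log (f i) := by
  rw [log_prod fun i hi => (rpow_pos_of_pos (hf i hi) _).ne']
  exact sum_congr rfl fun i hi => log_rpow (hf i hi) _

theorem stmt_10_general (α β : ℝ) (n : ℕ) (x p : Fin n → ℝ)
    (hx : ∀ k, 0 < x k) (hp : ∀ k, 0 ≤ p k) (hsum : ∑ k, p k = 1)
    (hcond : (0 < β ∧ α ≤ 0) ∨ (1 ≤ β ∧ α ≤ 1 / 2)) :
    (∏ k, x k ^ (p k * (x k + β - α))) /
        (∑ k, p k * x k) ^ (∑ k, p k * x k + β - α)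
      ≤ (∏ k, Real.Gamma (x k + β) ^ p k) / Real.Gamma (∑ k, p k * x k + β) := by
  have hS : 0 < ∑ k, p k * x k :=
    (convex_Ioi (0 : ℝ)).sum_mem (fun k _ => hp k) hsum fun k _ => Set.mem_Ioi.mpr (hx k)
  have hΓ : ∀ y, 0 < y → 0 < Gamma (y + β) := fun y hy =>
    Gamma_pos_of_pos (add_pos hy (AdmissibleParams.pos hcond))
  have hnumL : 0 < ∏ k, x k ^ (p k * (x k + β - α)) :=
    prod_pos fun k _ => rpow_pos_of_pos (hx k) _
  have hnumR : 0 < ∏ k, Gamma (x k + β) ^ p k := prod_pos fun k _ => rpow_pos_of_pos (hΓ _ (hx k)) _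
  have hdenL : 0 < (∑ k, p k * x k) ^ (∑ k, p k * x k + β - α) := rpow_pos_of_pos hS _
  have hjensen := (convexOn_log_Gamma_add_sub_mul_log hcond).map_sum_le
    (fun k _ => hp k) hsum fun k _ => hx k
  simp only [smul_eq_mul, mul_sub, sum_sub_distrib] at hjensen
  simp only [← mul_assoc] at hjensen
  rw [← log_le_log_iff (div_pos hnumL hdenL) (div_pos hnumR (hΓ _ hS)),
    log_div hnumL.ne' hdenL.ne', log_div hnumR.ne' (hΓ _ hS).ne', log_prod_rpow fun k _ => hx k,
    log_prod_rpow fun k _ => hΓ _ (hx k), log_rpow hS]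
  linarith

theorem stmt_10 (α β : ℝ) (n : ℕ) (hn : 1 ≤ n) (x p : Fin n → ℝ)
    (hx : ∀ k, 0 < x k) (hp : ∀ k, 0 ≤ p k) (hsum : ∑ k, p k = 1)
    (hcond : (0 < β ∧ α ≤ 0) ∨ (1 ≤ β ∧ α ≤ 1 / 2)) :
    (∏ k, x k ^ (p k * (x k + β - α))) /
        (∑ k, p k * x k) ^ (∑ k, p k * x k + β - α)
      ≤ (∏ k, Real.Gamma (x k + β) ^ p k) / Real.Gamma (∑ k, p k * x k + β) :=
  stmt_10_general α β n x p hx hp hsum hcond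
end

section
/- Let α ≥ β ≥ 1/2. Then for all x, y ∈ (0,∞) with x ≠ y, the inequality I(x,y) < [ (x/y)^{α−β} · Γ(x+β)/Γ(y+β) ]^{1/(x−y)} holds, where I(a,b) = (1/e) · (b^b / a^a)^{1/(b−a)} for a, b > 0 with a ≠ b is the identric (exponential) mean. -/
/-!
Taking logarithms, the inequality says that `(α - β)` times a slope of `log` plus a slope of
`g t = log Γ (t + β) - (t log t - t)` is positive, so it suffices that `g` is strictly increasing
on `(0, ∞)`. Log-convexity of `Γ` makes `log Γ (t + β) - log Γ (t + 1/2)` nondecreasing, which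
reduces this to `β = 1/2`. There, `log Γ (x + 1/2) - log Γ (y + 1/2)` is the limit of the
corresponding differences of Gauss's finite products. Each factor `log (c + 1/2)` is the forward
difference of `t log t` at `c` up to a defect that is strictly increasing in `c`, because
`log (1 + 1/c) > 1/(c + 1/2)`; telescoping and passing to the limit gives the claim.
-/

open Real

/-- The identric (exponential) mean of two distinct positive numbers. -/
noncomputable def identricMean (a b : ℝ) : ℝ :=
  (1 / Real.exp 1) * (b ^ b / a ^ a) ^ (1 / (b - a))

open Set Filter Topology Finset
open scoped Nat

theorem inv_add_half_lt_log_add_one_sub_log {c : ℝ} (hc : 0 < c) :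
    (c + 1 / 2)⁻¹ < log (c + 1) - log c := by
  have hle := sum_le_hasSum (range 2) (fun k _ => by positivity) (hasSum_log_one_add_inv hc)
  have hlog : log (c + 1) - log c = log (1 + c⁻¹) := by
    rw [← log_div (by positivity) hc.ne']
    congr 1
    field_simp
  have hfirst : (c + 1 / 2)⁻¹ = 2 * (2 * c + 1)⁻¹ := by field_simp
  rw [hlog, hfirst]
  refine lt_of_lt_of_le ?_ hle
  norm_num [sum_range_succ]
  positivity

-- The forward difference of `t log t` at `c` minus that of `log Γ (t + 1/2)`.
noncomputable def halfGammaDefect (c : ℝ) : ℝ :=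
  (c + 1) * log (c + 1) - c * log c - log (c + 1 / 2)

theorem hasDerivAt_halfGammaDefect {c : ℝ} (hc : 0 < c) :
    HasDerivAt halfGammaDefect (log (c + 1) - log c - (c + 1 / 2)⁻¹) c := by
  have h₁ := (hasDerivAt_mul_log (by positivity : c + 1 ≠ 0)).comp_add_const c 1
  have h₂ := hasDerivAt_mul_log hc.ne'
  have h₃ := (hasDerivAt_log (by positivity : c + 1 / 2 ≠ 0)).comp_add_const c (1 / 2)
  exact ((h₁.sub h₂).sub h₃).congr_deriv (by ring)

theorem strictMonoOn_halfGammaDefect : StrictMonoOn halfGammaDefect (Ioi 0) :=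
  strictMonoOn_of_hasDerivWithinAt_pos (convex_Ioi 0)
    (fun _ hc => (hasDerivAt_halfGammaDefect hc).continuousAt.continuousWithinAt)
    (fun _ hc => (hasDerivAt_halfGammaDefect (interior_subset hc)).hasDerivWithinAt)
    (fun _ hc => sub_pos.2 (inv_add_half_lt_log_add_one_sub_log (interior_subset hc)))

theorem logGammaSeq_add_half (c : ℝ) (n : ℕ) :
    BohrMollerup.logGammaSeq (c + 1 / 2) n = (c + 1 / 2) * log n + log n !
      - ((c + (n + 1)) * log (c + (n + 1)) - c * log c)
      + ∑ m ∈ range (n + 1), halfGammaDefect (c + m) := by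
  have htel := sum_range_sub (fun m : ℕ => (c + m) * log (c + m)) (n + 1)
  have hsplit : ∑ m ∈ range (n + 1), log (c + 1 / 2 + m)
      = ∑ m ∈ range (n + 1), ((c + (m + 1 : ℕ)) * log (c + (m + 1 : ℕ)) - (c + m) * log (c + m))
        - ∑ m ∈ range (n + 1), halfGammaDefect (c + m) := by
    rw [← sum_sub_distrib]
    refine sum_congr rfl fun m _ => ?_
    simp only [halfGammaDefect]
    push_cast
    ring_nf
  rw [BohrMollerup.logGammaSeq, hsplit, htel]
  push_cast [add_zero]
  ring

theorem mul_log_sub_mul_log_le {a b : ℝ} (ha : 0 < a) (hb : 0 < b) :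
    b * log b - a * log a ≤ (b - a) * (log b + 1) := by
  have h := mul_le_mul_of_nonneg_left (log_le_sub_one_of_pos (div_pos hb ha)) ha.le
  rw [log_div hb.ne' ha.ne', mul_sub_one, mul_div_cancel₀ b ha.ne'] at h
  linarith

theorem le_logGammaSeq_add_half_sub {x y : ℝ} (hy : 0 < y) (hyx : y < x) (n : ℕ) :
    x * log x - y * log y - (x - y) + (halfGammaDefect x - halfGammaDefect y)
        - (x - y) * (log (n + (x + 1)) - log n)
      ≤ BohrMollerup.logGammaSeq (x + 1 / 2) n - BohrMollerup.logGammaSeq (y + 1 / 2) n := by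
  have hx : 0 < x := hy.trans hyx
  -- Keep only the `m = 0` term of the defect sums, and bound the boundary terms of the
  -- telescoped `t log t` by the tangent line at `x + n + 1`.
  have hsum := single_le_sum
    (f := fun m : ℕ => halfGammaDefect (x + m) - halfGammaDefect (y + m))
    (fun m _ => sub_nonneg.2 <| strictMonoOn_halfGammaDefect.monotoneOn
      (mem_Ioi.2 (by positivity)) (mem_Ioi.2 (by positivity)) (by linarith))
    (mem_range.2 n.succ_pos)
  simp only [Nat.cast_zero, add_zero, sum_sub_distrib] at hsum
  have htail := mul_log_sub_mul_log_le (by positivity : 0 < y + (n + 1))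
    (by positivity : 0 < x + (n + 1))
  rw [logGammaSeq_add_half, logGammaSeq_add_half, show (n : ℝ) + (x + 1) = x + (n + 1) by ring]
  linarith

theorem strictMonoOn_log_Gamma_add_half_sub_mul_log :
    StrictMonoOn (fun t => log (Gamma (t + 1 / 2)) - (t * log t - t)) (Ioi 0) := by
  intro y (hy : 0 < y) x (hx : 0 < x) hyx
  have hlower : Tendsto (fun n : ℕ => x * log x - y * log y - (x - y)
      + (halfGammaDefect x - halfGammaDefect y) - (x - y) * (log (n + (x + 1)) - log n)) atTop
      (𝓝 (x * log x - y * log y - (x - y) + (halfGammaDefect x - halfGammaDefect y))) := by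
    simpa using tendsto_const_nhds.sub
      (((tendsto_log_comp_add_sub_log (x + 1)).comp tendsto_natCast_atTop_atTop).const_mul (x - y))
  have hGamma := (BohrMollerup.tendsto_log_gamma (by positivity : 0 < x + 1 / 2)).sub
    (BohrMollerup.tendsto_log_gamma (by positivity : 0 < y + 1 / 2))
  have hlim := le_of_tendsto_of_tendsto' hlower hGamma (le_logGammaSeq_add_half_sub hy hyx)
  have hdefect := strictMonoOn_halfGammaDefect hy hx hyx
  simp only
  linarith

theorem ConvexOn.map_add_sub_le_map_add_sub {𝕜 : Type*} [Field 𝕜] [LinearOrder 𝕜]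
    [IsStrictOrderedRing 𝕜] {s : Set 𝕜} {f : 𝕜 → 𝕜} (hf : ConvexOn 𝕜 s f) {a b d : 𝕜}
    (ha : a ∈ s) (hb : b + d ∈ s) (hab : a ≤ b) (hd : 0 ≤ d) :
    f (a + d) - f a ≤ f (b + d) - f b := by
  rcases hab.eq_or_lt with rfl | hab
  · rfl
  rcases hd.eq_or_lt with rfl | hd
  · simp
  have h₁ := hf.secant_mono_aux1 ha hb (by linarith : a < a + d) (by linarith)
  have h₂ := hf.secant_mono_aux1 ha hb hab (by linarith)
  have key : (b + d - a) * (f (a + d) - f a) ≤ (b + d - a) * (f (b + d) - f b) := by linarith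
  exact le_of_mul_le_mul_left key (by linarith)

theorem monotoneOn_log_Gamma_add_sub_log_Gamma_add_half {β : ℝ} (hβ : 1 / 2 ≤ β) :
    MonotoneOn (fun t => log (Gamma (t + β)) - log (Gamma (t + 1 / 2))) (Ioi 0) := by
  intro y (hy : 0 < y) x (hx : 0 < x) hyx
  have h := convexOn_log_Gamma.map_add_sub_le_map_add_sub (a := y + 1 / 2) (b := x + 1 / 2)
    (d := β - 1 / 2) (mem_Ioi.2 (by positivity)) (mem_Ioi.2 (by linarith)) (by linarith)
    (by linarith)
  simpa only [Function.comp_apply, add_add_sub_cancel] using h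

theorem strictMonoOn_log_Gamma_add_sub_mul_log {β : ℝ} (hβ : 1 / 2 ≤ β) :
    StrictMonoOn (fun t => log (Gamma (t + β)) - (t * log t - t)) (Ioi 0) := by
  convert strictMonoOn_log_Gamma_add_half_sub_mul_log.add_monotone
    (monotoneOn_log_Gamma_add_sub_log_Gamma_add_half hβ) using 2 with t
  ring

theorem identricMean_eq_exp {a b : ℝ} (ha : 0 < a) (hb : 0 < b) :
    identricMean a b = exp (slope (fun t => t * log t) a b - 1) := by
  rw [identricMean, rpow_def_of_pos (by positivity), log_div (by positivity) (by positivity),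
    log_rpow hb, log_rpow ha, slope_def_field, one_div (exp 1), ← exp_neg, ← exp_add]
  ring_nf

theorem stmt_12 (α β : ℝ) (hβ : 1 / 2 ≤ β) (hαβ : β ≤ α)
    (x y : ℝ) (hx : 0 < x) (hy : 0 < y) (hxy : x ≠ y) :
    identricMean x y
      < ((x / y) ^ (α - β) * (Real.Gamma (x + β) / Real.Gamma (y + β))) ^ (1 / (x - y)) := by
  have hGx : 0 < Gamma (x + β) := Gamma_pos_of_pos (by linarith)
  have hGy : 0 < Gamma (y + β) := Gamma_pos_of_pos (by linarith)
  have hrhs : ((x / y) ^ (α - β) * (Gamma (x + β) / Gamma (y + β))) ^ (1 / (x - y))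
      = exp ((α - β) * slope log y x + slope (fun t => log (Gamma (t + β))) y x) := by
    rw [rpow_def_of_pos (by positivity), log_mul (by positivity) (by positivity),
      log_rpow (by positivity), log_div hx.ne' hy.ne', log_div hGx.ne' hGy.ne',
      slope_def_field, slope_def_field]
    congr 1
    ring
  have hslope : slope (fun t => log (Gamma (t + β))) y x
      = slope (fun t => log (Gamma (t + β)) - (t * log t - t)) y x
        + (slope (fun t => t * log t) x y - 1) := by
    simp only [slope_def_field]
    field_simp [sub_ne_zero.2 hxy, sub_ne_zero.2 hxy.symm]
    ring
  have hg := (strictMonoOn_log_Gamma_add_sub_mul_log hβ).slope_pos hy hx hxy.symm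
  have hlog := strictMonoOn_log.slope_pos hy hx hxy.symm
  rw [identricMean_eq_exp hx hy, hrhs, exp_lt_exp, hslope]
  linarith [mul_nonneg (sub_nonneg.2 hαβ) hlog.le]
end
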